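/- arXiv:1304.5263 — 7 statements merged into one kernel-verified Lean document; each statement's English description precedes it below -/
import Mathlib

section
/- Let c₁ < c₂ be real numbers and set c_m = (c₁ + c₂)/2. Let χ⁰ : ℝ → ℝ satisfy 0 ≤ χ⁰ ≤ 1, χ⁰(x) = 1 for x ≤ 0 and χ⁰(x) = 0 for x ≥ 1. For h > 0 define χ̃₁(t,x) = χ⁰((x − h/4 − c_m t)/(h/4)), χ̃₂ = 1 − χ̃₁, and χᵢ = χ̃ᵢ/√(χ̃₁² + χ̃₂²) for i = 1, 2. Then for every ε > 0 there exists a constant C_ε > 0 such that for all h ≥ 1, all t ≥ 0 and all x ∈ ℝ: exp(−ε|x − c₁t|) · χ₂(t,x) ≤ C_ε/h and exp(−ε|x − h − c₂t|) · χ₁(t,x) ≤ C_ε/h. -/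
/-!
Where `χ₂ ≠ 0` the argument of `χ⁰` is positive, so `x - c₁ t ≥ h/4 + (c₂ - c₁) t / 2 ≥ h/4`;
where `χ₁ ≠ 0` it is below `1`, so `h + c₂ t - x ≥ h/2 + (c₂ - c₁) t / 2 ≥ h/4`. Since
`0 ≤ χᵢ ≤ 1`, both products are at most `exp (-ε h / 4) ≤ 4 / (ε h)`.
-/

open Real

lemma div_sqrt_sq_add_sq_le_one (a b : ℝ) : a / √(a ^ 2 + b ^ 2) ≤ 1 :=
  div_le_one_of_le₀ ((le_abs_self a).trans (abs_le_sqrt (by nlinarith [sq_nonneg b])))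
    (sqrt_nonneg _)

lemma exp_neg_le_inv {y : ℝ} (hy : 0 < y) : exp (-y) ≤ y⁻¹ := by
  rw [exp_neg]
  exact inv_anti₀ hy (by linarith [add_one_le_exp y])

lemma exp_neg_mul_abs_mul_le {ε d u a : ℝ} (hε : 0 ≤ ε) (hd : a ≠ 0 → d ≤ |u|)
    (ha₀ : 0 ≤ a) (ha₁ : a ≤ 1) : exp (-ε * |u|) * a ≤ exp (-(ε * d)) := by
  rcases eq_or_ne a 0 with rfl | ha
  · simpa using (exp_pos _).le
  · calc exp (-ε * |u|) * a ≤ exp (-ε * |u|) := mul_le_of_le_one_right (exp_pos _).le ha₁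
      _ ≤ exp (-(ε * d)) := exp_le_exp.mpr (by nlinarith [hd ha])

/-- Localization estimates for the partition-of-unity cut-offs `χ₁, χ₂` adapted to
two solitary waves centered at `x = c₁ t` and `x = h + c₂ t`. -/
theorem cutoff_localization_estimate
    (c₁ c₂ : ℝ) (hc : c₁ < c₂) (χ0 : ℝ → ℝ)
    (hrange : ∀ x : ℝ, 0 ≤ χ0 x ∧ χ0 x ≤ 1)
    (hleft : ∀ x : ℝ, x ≤ 0 → χ0 x = 1)
    (hright : ∀ x : ℝ, 1 ≤ x → χ0 x = 0)
    (ε : ℝ) (hε : 0 < ε) :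
    ∃ C : ℝ, 0 < C ∧ ∀ h : ℝ, 1 ≤ h → ∀ t : ℝ, 0 ≤ t → ∀ x : ℝ,
      Real.exp (-ε * |x - c₁ * t|) *
        ((1 - χ0 ((x - h / 4 - ((c₁ + c₂) / 2) * t) / (h / 4))) /
          Real.sqrt ((χ0 ((x - h / 4 - ((c₁ + c₂) / 2) * t) / (h / 4))) ^ 2 +
            (1 - χ0 ((x - h / 4 - ((c₁ + c₂) / 2) * t) / (h / 4))) ^ 2)) ≤ C / h ∧
      Real.exp (-ε * |x - h - c₂ * t|) *
        ((χ0 ((x - h / 4 - ((c₁ + c₂) / 2) * t) / (h / 4))) /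
          Real.sqrt ((χ0 ((x - h / 4 - ((c₁ + c₂) / 2) * t) / (h / 4))) ^ 2 +
            (1 - χ0 ((x - h / 4 - ((c₁ + c₂) / 2) * t) / (h / 4))) ^ 2)) ≤ C / h := by
  refine ⟨4 / ε, by positivity, fun h hh t ht x => ?_⟩
  have hh₄ : 0 < h / 4 := by linarith
  have hdecay : exp (-(ε * (h / 4))) ≤ 4 / ε / h :=
    (exp_neg_le_inv (by positivity)).trans_eq (by field_simp)
  have hspread : 0 ≤ (c₂ - c₁) * t := mul_nonneg (sub_nonneg.mpr hc.le) ht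
  set y := (x - h / 4 - ((c₁ + c₂) / 2) * t) / (h / 4)
  obtain ⟨hχ₀, hχ₁⟩ := hrange y
  constructor
  · refine (exp_neg_mul_abs_mul_le hε.le (fun hne => ?_) (div_nonneg (by linarith)
      (sqrt_nonneg _)) (by rw [add_comm]; exact div_sqrt_sq_add_sq_le_one _ _)).trans hdecay
    have hy₀ : 0 < y := by
      by_contra! hy₀
      exact (div_ne_zero_iff.mp hne).1 (by rw [hleft y hy₀, sub_self])
    have := (div_pos_iff_of_pos_right hh₄).mp hy₀
    exact le_abs.mpr (Or.inl (by linarith))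
  · refine (exp_neg_mul_abs_mul_le hε.le (fun hne => ?_) (div_nonneg hχ₀ (sqrt_nonneg _))
      (div_sqrt_sq_add_sq_le_one _ _)).trans hdecay
    have hy₁ : y < 1 := by
      by_contra! hy₁
      exact (div_ne_zero_iff.mp hne).1 (hright y hy₁)
    have := (div_lt_one hh₄).mp hy₁
    exact le_abs.mpr (Or.inr (by linarith))
end

section
/- Let c₁ < c₂ be real numbers and set c_m = (c₁ + c₂)/2. Let χ⁰ : ℝ → ℝ be a C^∞ function satisfying 0 ≤ χ⁰ ≤ 1, χ⁰(x) = 1 for x ≤ 0 and χ⁰(x) = 0 for x ≥ 1. For h > 0 define χ̃₁(t,x) = χ⁰((x − h/4 − c_m t)/(h/4)), χ̃₂ = 1 − χ̃₁, and χᵢ = χ̃ᵢ/√(χ̃₁² + χ̃₂²) for i = 1, 2, viewed as smooth functions on ℝ² in the variables (t,x). Then for every integer n ≥ 1 there exists a constant C_n > 0 (depending only on n, χ⁰, c₁, c₂) such that for all h ≥ 1 and all (t,x) ∈ ℝ², the n-th iterated (total) derivative of χᵢ at (t,x) has operator norm at most C_n · h^{−n}, for i = 1, 2. -/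
open Real

lemma my_iteratedFDeriv_eventually_const {f : ℝ → ℝ} {x c : ℝ} {n : ℕ} (hn : n ≠ 0)
    (h : ∀ᶠ y in nhds x, f y = c) : iteratedFDeriv ℝ n f x = 0 := by
  have h1 : f =ᶠ[nhdsWithin x Set.univ] (fun _ => c) := by
    rw [nhdsWithin_univ]; exact h
  have h2 : f x = c := h.self_of_nhds
  have := Filter.EventuallyEq.iteratedFDerivWithin_eq (𝕜 := ℝ) (s := Set.univ) h1 h2 n
  simp only [← iteratedFDerivWithin_univ] at *
  rw [this, iteratedFDerivWithin_univ, iteratedFDeriv_const_of_ne hn]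
  rfl

lemma my_bound {F : ℝ → ℝ} (hF : ContDiff ℝ (⊤ : ℕ∞) F) {a b cl cr : ℝ}
    (hl : ∀ v, v ≤ a → F v = cl) (hr : ∀ v, b ≤ v → F v = cr) {n : ℕ} (hn : n ≠ 0) :
    ∃ M : ℝ, 0 ≤ M ∧ ∀ v : ℝ, ‖iteratedFDeriv ℝ n F v‖ ≤ M := by
  have hcont : ContinuousOn (fun v => iteratedFDeriv ℝ n F v) (Set.Icc a b) :=
    (hF.continuous_iteratedFDeriv (by exact_mod_cast le_top)).continuousOn
  obtain ⟨M, hM⟩ := (isCompact_Icc (a := a) (b := b)).exists_bound_of_continuousOn hcont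
  refine ⟨max M 0, le_max_right _ _, fun v => ?_⟩
  rcases le_or_gt v a with hva | hva
  · rcases lt_or_eq_of_le hva with hva' | rfl
    · have : iteratedFDeriv ℝ n F v = 0 := my_iteratedFDeriv_eventually_const hn
        (Filter.eventually_of_mem (Iio_mem_nhds hva') (fun y hy => hl y (le_of_lt hy)))
      simp [this, le_max_right]
    · rcases le_or_gt v b with hvb | hvb
      · exact le_max_of_le_left (hM v ⟨le_refl _, hvb⟩)
      · have : iteratedFDeriv ℝ n F v = 0 := my_iteratedFDeriv_eventually_const hn
          (Filter.eventually_of_mem (Ioi_mem_nhds hvb) (fun y hy => hr y (le_of_lt hy)))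
        simp [this, le_max_right]
  · rcases le_or_gt v b with hvb | hvb
    · exact le_max_of_le_left (hM v ⟨le_of_lt hva, hvb⟩)
    · have : iteratedFDeriv ℝ n F v = 0 := my_iteratedFDeriv_eventually_const hn
        (Filter.eventually_of_mem (Ioi_mem_nhds hvb) (fun y hy => hr y (le_of_lt hy)))
      simp [this, le_max_right]

/-- Derivative bounds for the partition-of-unity cut-offs `χ₁, χ₂`: every iterated
(total) derivative of order `n ≥ 1` is `O(h^{-n})`, uniformly in `(t,x)`. -/
theorem cutoff_derivative_estimate
    (c₁ c₂ : ℝ) (hc : c₁ < c₂) (χ0 : ℝ → ℝ)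
    (hsmooth : ContDiff ℝ (⊤ : ℕ∞) χ0)
    (hrange : ∀ x : ℝ, 0 ≤ χ0 x ∧ χ0 x ≤ 1)
    (hleft : ∀ x : ℝ, x ≤ 0 → χ0 x = 1)
    (hright : ∀ x : ℝ, 1 ≤ x → χ0 x = 0) :
    ∀ n : ℕ, 1 ≤ n → ∃ C : ℝ, 0 < C ∧ ∀ h : ℝ, 1 ≤ h → ∀ p : ℝ × ℝ,
      ‖iteratedFDeriv ℝ n (fun q : ℝ × ℝ =>
          (χ0 ((q.2 - h / 4 - ((c₁ + c₂) / 2) * q.1) / (h / 4))) /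
            Real.sqrt ((χ0 ((q.2 - h / 4 - ((c₁ + c₂) / 2) * q.1) / (h / 4))) ^ 2 +
              (1 - χ0 ((q.2 - h / 4 - ((c₁ + c₂) / 2) * q.1) / (h / 4))) ^ 2)) p‖
        ≤ C / h ^ n ∧
      ‖iteratedFDeriv ℝ n (fun q : ℝ × ℝ =>
          (1 - χ0 ((q.2 - h / 4 - ((c₁ + c₂) / 2) * q.1) / (h / 4))) /
            Real.sqrt ((χ0 ((q.2 - h / 4 - ((c₁ + c₂) / 2) * q.1) / (h / 4))) ^ 2 +
              (1 - χ0 ((q.2 - h / 4 - ((c₁ + c₂) / 2) * q.1) / (h / 4))) ^ 2)) p‖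
        ≤ C / h ^ n := by
  intro n hn
  have hn0 : n ≠ 0 := by omega
  set cm : ℝ := (c₁ + c₂) / 2 with hcm
  -- the one-variable profiles
  set Ψ₁ : ℝ → ℝ := fun v =>
    χ0 (v - 1) / Real.sqrt (χ0 (v - 1) ^ 2 + (1 - χ0 (v - 1)) ^ 2) with hΨ₁
  set Ψ₂ : ℝ → ℝ := fun v =>
    (1 - χ0 (v - 1)) / Real.sqrt (χ0 (v - 1) ^ 2 + (1 - χ0 (v - 1)) ^ 2) with hΨ₂
  -- positivity of the denominator
  have hdpos : ∀ v : ℝ, 0 < χ0 (v - 1) ^ 2 + (1 - χ0 (v - 1)) ^ 2 := by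
    intro v; nlinarith [sq_nonneg (χ0 (v - 1)), sq_nonneg (1 - χ0 (v - 1)),
      sq_nonneg (2 * χ0 (v - 1) - 1)]
  have hsqrtpos : ∀ v : ℝ, 0 < Real.sqrt (χ0 (v - 1) ^ 2 + (1 - χ0 (v - 1)) ^ 2) :=
    fun v => Real.sqrt_pos.2 (hdpos v)
  -- smoothness of the profiles
  have hχs : ContDiff ℝ (⊤ : ℕ∞) (fun v : ℝ => χ0 (v - 1)) :=
    hsmooth.comp (contDiff_id.sub contDiff_const)
  have hden : ContDiff ℝ (⊤ : ℕ∞)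
      (fun v : ℝ => Real.sqrt (χ0 (v - 1) ^ 2 + (1 - χ0 (v - 1)) ^ 2)) :=
    ContDiff.sqrt ((hχs.pow 2).add ((contDiff_const.sub hχs).pow 2))
      (fun v => (hdpos v).ne')
  have hΨ₁s : ContDiff ℝ (⊤ : ℕ∞) Ψ₁ := hχs.div hden (fun v => (hsqrtpos v).ne')
  have hΨ₂s : ContDiff ℝ (⊤ : ℕ∞) Ψ₂ := (contDiff_const.sub hχs).div hden
    (fun v => (hsqrtpos v).ne')
  -- constancy on the sides
  have hΨ₁l : ∀ v : ℝ, v ≤ 1 → Ψ₁ v = 1 := by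
    intro v hv
    have h0 : χ0 (v - 1) = 1 := hleft _ (by linarith)
    simp [hΨ₁, h0]
  have hΨ₁r : ∀ v : ℝ, (2 : ℝ) ≤ v → Ψ₁ v = 0 := by
    intro v hv
    have h0 : χ0 (v - 1) = 0 := hright _ (by linarith)
    simp [hΨ₁, h0]
  have hΨ₂l : ∀ v : ℝ, v ≤ 1 → Ψ₂ v = 0 := by
    intro v hv
    have h0 : χ0 (v - 1) = 1 := hleft _ (by linarith)
    simp [hΨ₂, h0]
  have hΨ₂r : ∀ v : ℝ, (2 : ℝ) ≤ v → Ψ₂ v = 1 := by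
    intro v hv
    have h0 : χ0 (v - 1) = 0 := hright _ (by linarith)
    simp [hΨ₂, h0]
  obtain ⟨M₁, hM₁0, hM₁⟩ := my_bound hΨ₁s hΨ₁l hΨ₁r hn0
  obtain ⟨M₂, hM₂0, hM₂⟩ := my_bound hΨ₂s hΨ₂l hΨ₂r hn0
  -- the linear map
  set ℓ : ℝ × ℝ →L[ℝ] ℝ :=
    ContinuousLinearMap.snd ℝ ℝ ℝ - cm • ContinuousLinearMap.fst ℝ ℝ ℝ with hℓ
  set K : ℝ := 4 * ‖ℓ‖ + 1 with hK
  have hK1 : (1 : ℝ) ≤ K := by nlinarith [norm_nonneg ℓ]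
  refine ⟨(max M₁ M₂ + 1) * K ^ n, by positivity, ?_⟩
  intro h hh p
  have hh0 : (0 : ℝ) < h := lt_of_lt_of_le one_pos hh
  set L : ℝ × ℝ →L[ℝ] ℝ := (4 / h) • ℓ with hL
  -- the two target functions are Ψᵢ ∘ L
  have harg : ∀ q : ℝ × ℝ,
      (q.2 - h / 4 - cm * q.1) / (h / 4) = L q - 1 := by
    intro q
    have : L q = (4 / h) * (q.2 - cm * q.1) := by
      simp only [hL, hℓ, ContinuousLinearMap.smul_apply, ContinuousLinearMap.sub_apply,
        ContinuousLinearMap.coe_snd', ContinuousLinearMap.coe_fst', smul_eq_mul]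
      try ring
    rw [this]
    field_simp
    ring
  have hfun₁ : (fun q : ℝ × ℝ =>
      (χ0 ((q.2 - h / 4 - cm * q.1) / (h / 4))) /
        Real.sqrt ((χ0 ((q.2 - h / 4 - cm * q.1) / (h / 4))) ^ 2 +
          (1 - χ0 ((q.2 - h / 4 - cm * q.1) / (h / 4))) ^ 2)) = Ψ₁ ∘ L := by
    funext q
    simp only [Function.comp_apply, hΨ₁, harg q]
  have hfun₂ : (fun q : ℝ × ℝ =>
      (1 - χ0 ((q.2 - h / 4 - cm * q.1) / (h / 4))) /
        Real.sqrt ((χ0 ((q.2 - h / 4 - cm * q.1) / (h / 4))) ^ 2 +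
          (1 - χ0 ((q.2 - h / 4 - cm * q.1) / (h / 4))) ^ 2)) = Ψ₂ ∘ L := by
    funext q
    simp only [Function.comp_apply, hΨ₂, harg q]
  -- norm of L
  have hLnorm : ‖L‖ ≤ K / h := by
    have h1 : ‖L‖ ≤ ‖(4 / h)‖ * ‖ℓ‖ := ContinuousLinearMap.opNorm_smul_le _ _
    refine h1.trans ?_
    rw [Real.norm_eq_abs, abs_of_pos (by positivity), div_mul_eq_mul_div]
    gcongr
    linarith
  -- generic composition bound
  have key : ∀ (Ψ : ℝ → ℝ) (M : ℝ), ContDiff ℝ (⊤ : ℕ∞) Ψ → 0 ≤ M →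
      (∀ v, ‖iteratedFDeriv ℝ n Ψ v‖ ≤ M) →
      M ≤ max M₁ M₂ →
      ‖iteratedFDeriv ℝ n (Ψ ∘ L) p‖ ≤ (max M₁ M₂ + 1) * K ^ n / h ^ n := by
    intro Ψ M hΨ hM0 hM hMle
    have hcomp := ContinuousLinearMap.iteratedFDeriv_comp_right L hΨ p
      (i := n) (by exact_mod_cast le_top)
    rw [hcomp]
    calc ‖(iteratedFDeriv ℝ n Ψ (L p)).compContinuousLinearMap fun _ => L‖
        ≤ ‖iteratedFDeriv ℝ n Ψ (L p)‖ * ∏ _i : Fin n, ‖L‖ :=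
          ContinuousMultilinearMap.norm_compContinuousLinearMap_le _ _
      _ = ‖iteratedFDeriv ℝ n Ψ (L p)‖ * ‖L‖ ^ n := by
          rw [Finset.prod_const, Finset.card_fin]
      _ ≤ M * (K / h) ^ n := by
          apply mul_le_mul (hM _) (pow_le_pow_left₀ (norm_nonneg _) hLnorm n)
            (by positivity) hM0
      _ = M * K ^ n / h ^ n := by rw [div_pow]; ring
      _ ≤ (max M₁ M₂ + 1) * K ^ n / h ^ n := by
          gcongr
          linarith
  rw [hfun₁, hfun₂]
  exact ⟨key Ψ₁ M₁ hΨ₁s hM₁0 hM₁ (le_max_left _ _),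
    key Ψ₂ M₂ hΨ₂s hM₂0 hM₂ (le_max_right _ _)⟩
end

section
/- For every real number x ≠ 0 one has x · cosh(x)/sinh(x) < 1 + x²/3, i.e. x·coth(x) < 1 + x²/3. -/
/-!
Both sides are even in `x`, so it suffices to take `x > 0`, where the claim reads
`x cosh x < (1 + x²/3) sinh x`. The difference of the two sides vanishes at `0` and has derivative
`(x/3) (x cosh x - sinh x)`; the factor `x cosh x - sinh x` also vanishes at `0` and has derivative
`x sinh x > 0`. Two monotonicity arguments therefore give the inequality.
-/

open Real Set

lemma strictMonoOn_Ici_of_hasDerivAt_pos {f f' : ℝ → ℝ} {a : ℝ}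
    (hf : ∀ y, HasDerivAt f (f' y) y) (hf' : ∀ y, a < y → 0 < f' y) :
    StrictMonoOn f (Ici a) :=
  strictMonoOn_of_hasDerivWithinAt_pos (convex_Ici a)
    (fun y _ => (hf y).continuousAt.continuousWithinAt) (fun y _ => (hf y).hasDerivWithinAt)
    fun y hy => hf' y (by rwa [interior_Ici] at hy)

namespace Real

lemma sinh_lt_mul_cosh {x : ℝ} (hx : 0 < x) : sinh x < x * cosh x := by
  have hderiv (y : ℝ) : HasDerivAt (fun y => y * cosh y - sinh y) (y * sinh y) y := by
    refine ((hasDerivAt_id' y).mul (hasDerivAt_cosh y)).sub (hasDerivAt_sinh y) |>.congr_deriv ?_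
    ring
  have := strictMonoOn_Ici_of_hasDerivAt_pos hderiv (fun y hy => mul_pos hy (sinh_pos_iff.2 hy))
    self_mem_Ici hx.le hx
  simpa using this

lemma mul_cosh_lt_one_add_sq_div_three_mul_sinh {x : ℝ} (hx : 0 < x) :
    x * cosh x < (1 + x ^ 2 / 3) * sinh x := by
  have hderiv (y : ℝ) : HasDerivAt (fun y => (1 + y ^ 2 / 3) * sinh y - y * cosh y)
      (y / 3 * (y * cosh y - sinh y)) y := by
    refine ((((hasDerivAt_pow 2 y).div_const 3).const_add 1).mul (hasDerivAt_sinh y)).sub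
      ((hasDerivAt_id' y).mul (hasDerivAt_cosh y)) |>.congr_deriv ?_
    push_cast
    ring
  have := strictMonoOn_Ici_of_hasDerivAt_pos hderiv
    (fun y hy => mul_pos (by positivity) (sub_pos.2 (sinh_lt_mul_cosh hy))) self_mem_Ici hx.le hx
  simpa using this

lemma mul_cosh_div_sinh_lt_one_add_sq_div_three {x : ℝ} (hx : 0 < x) :
    x * cosh x / sinh x < 1 + x ^ 2 / 3 :=
  (div_lt_iff₀ (sinh_pos_iff.2 hx)).2 (mul_cosh_lt_one_add_sq_div_three_mul_sinh hx)

end Real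

/-- For every nonzero real `x`, `x · coth x < 1 + x²/3`. -/
theorem coth_lt_one_add_sq_div_three (x : ℝ) (hx : x ≠ 0) :
    x * Real.cosh x / Real.sinh x < 1 + x ^ 2 / 3 := by
  rcases hx.lt_or_gt with hneg | hpos
  · simpa [neg_div_neg_eq] using mul_cosh_div_sinh_lt_one_add_sq_div_three (neg_pos.2 hneg)
  · exact mul_cosh_div_sinh_lt_one_add_sq_div_three hpos
end

section
/- Let T > 0, ω > 0, A ≥ 0 and γ > 0 satisfy 2γ > ω. Let g : ℝ → ℝ be continuous and nonnegative on [0,T] and suppose that g(t) ≤ ω·(∫_t^T g(τ) dτ + A·exp(−2γt)) for every t ∈ [0,T]. Then for every t ∈ [0,T] one has ∫_t^T g(τ) dτ ≤ (ωA/(2γ − ω))·exp(−2γt), and consequently g(t) ≤ (2γωA/(2γ − ω))·exp(−2γt). -/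
/-!
Put `G t = ∫ τ in t..T, g τ` and `C = ωA / (2γ - ω)`. The hypothesis says `-G' ≤ ωG + ωA e^{-2γt}`,
and since `(2γ - ω) C = ωA` the difference `ψ = G - C e^{-2γt}` satisfies `ψ' ≥ -ωψ`. Hence
`e^{ωt} ψ` is nondecreasing, and `ψ(T) = -C e^{-2γT} ≤ 0` forces `ψ ≤ 0` on `[0, T]`.
-/

open MeasureTheory intervalIntegral Real Set

theorem nonpos_of_hasDerivAt_ge_neg_mul {ψ ψ' : ℝ → ℝ} {a b ω : ℝ}
    (hψc : ContinuousOn ψ (Icc a b)) (hψ : ∀ t ∈ Ioo a b, HasDerivAt ψ (ψ' t) t)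
    (hψ' : ∀ t ∈ Ioo a b, -ω * ψ t ≤ ψ' t) (hψb : ψ b ≤ 0) :
    ∀ t ∈ Icc a b, ψ t ≤ 0 := by
  intro t ht
  have hmono : MonotoneOn (fun s => exp (ω * s) * ψ s) (Icc a b) := by
    refine monotoneOn_of_hasDerivWithinAt_nonneg (convex_Icc a b)
      ((continuous_exp.comp (continuous_const_mul ω)).continuousOn.mul hψc) (fun s hs => ?_)
      (fun s hs => ?_) (f' := fun s => exp (ω * s) * (ω * ψ s + ψ' s))
    · rw [interior_Icc] at hs
      have hexp : HasDerivAt (fun s => exp (ω * s)) (exp (ω * s) * ω) s := by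
        simpa using ((hasDerivAt_id s).const_mul ω).exp
      exact ((hexp.mul (hψ s hs)).congr_deriv (by ring)).hasDerivWithinAt
    · rw [interior_Icc] at hs
      have hψs := hψ' s hs
      have : 0 ≤ ω * ψ s + ψ' s := by linarith
      positivity
  have hb : b ∈ Icc a b := ⟨ht.1.trans ht.2, le_rfl⟩
  have hweighted : exp (ω * t) * ψ t ≤ 0 := calc
    exp (ω * t) * ψ t ≤ exp (ω * b) * ψ b := hmono ht hb ht.2
    _ ≤ 0 := mul_nonpos_of_nonneg_of_nonpos (exp_pos _).le hψb
  exact nonpos_of_mul_nonpos_right hweighted (exp_pos _)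

theorem le_mul_exp_neg_of_neg_deriv_le {G G' : ℝ → ℝ} {a b ω c K : ℝ}
    (hGc : ContinuousOn G (Icc a b)) (hG : ∀ t ∈ Ioo a b, HasDerivAt G (G' t) t)
    (hG' : ∀ t ∈ Ioo a b, -G' t ≤ ω * G t + (c - ω) * K * exp (-c * t))
    (hGb : G b ≤ K * exp (-c * b)) :
    ∀ t ∈ Icc a b, G t ≤ K * exp (-c * t) := by
  have hexp (t : ℝ) : HasDerivAt (fun s => K * exp (-c * s)) (K * (exp (-c * t) * -c)) t := by
    simpa using (((hasDerivAt_id t).const_mul (-c)).exp).const_mul K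
  have hψ := nonpos_of_hasDerivAt_ge_neg_mul (ω := ω) (ψ := fun s => G s - K * exp (-c * s))
    (hGc.sub (continuous_const.mul (continuous_exp.comp (continuous_const_mul _))).continuousOn)
    (fun t ht => (hG t ht).sub (hexp t))
    (fun t ht => by linarith [hG' t ht]) (by simpa using hGb)
  exact fun t ht => sub_nonpos.mp (hψ t ht)

theorem hasDerivAt_integral_left_of_continuousOn {g : ℝ → ℝ} {a b t : ℝ}
    (hgc : ContinuousOn g (Icc a b)) (ht : t ∈ Ioo a b) :
    HasDerivAt (fun u => ∫ τ in u..b, g τ) (-g t) t := by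
  have hnhds : Icc a b ∈ nhds t := Icc_mem_nhds ht.1 ht.2
  have hsub : uIcc t b ⊆ Icc a b :=
    uIcc_subset_Icc (Ioo_subset_Icc_self ht) ⟨ht.1.le.trans ht.2.le, le_rfl⟩
  exact integral_hasDerivAt_left (hgc.mono hsub).intervalIntegrable
    ⟨Icc a b, hnhds, hgc.aestronglyMeasurable measurableSet_Icc⟩ (hgc.continuousAt hnhds)

theorem backward_gronwall_general
    (T ω A γ : ℝ) (hω : 0 < ω) (hA : 0 ≤ A)
    (hωγ : ω < 2 * γ)
    (g : ℝ → ℝ) (hgc : ContinuousOn g (Set.Icc 0 T))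
    (hineq : ∀ t ∈ Set.Icc (0 : ℝ) T,
      g t ≤ ω * ((∫ τ in t..T, g τ) + A * Real.exp (-(2 * γ) * t))) :
    ∀ t ∈ Set.Icc (0 : ℝ) T,
      (∫ τ in t..T, g τ) ≤ (ω * A / (2 * γ - ω)) * Real.exp (-(2 * γ) * t) ∧
      g t ≤ (2 * γ * ω * A / (2 * γ - ω)) * Real.exp (-(2 * γ) * t) := by
  intro t ht
  have hgap : 0 < 2 * γ - ω := by linarith
  set C := ω * A / (2 * γ - ω)
  have hC : (2 * γ - ω) * C = ω * A := by simp only [C]; field_simp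
  have hIcc : uIcc 0 T = Icc 0 T := uIcc_of_le (ht.1.trans ht.2)
  have hGcont : ContinuousOn (fun u => ∫ τ in u..T, g τ) (Icc 0 T) :=
    hIcc ▸ continuousOn_primitive_interval_left (hIcc ▸ hgc.integrableOn_Icc)
  have hG : (∫ τ in t..T, g τ) ≤ C * exp (-(2 * γ) * t) :=
    le_mul_exp_neg_of_neg_deriv_le hGcont
      (fun s hs => hasDerivAt_integral_left_of_continuousOn hgc hs)
      (fun s hs => by rw [hC]; linarith [hineq s (Ioo_subset_Icc_self hs)])
      (by simp only [integral_same]; positivity) t ht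
  refine ⟨hG, ?_⟩
  calc g t ≤ ω * ((∫ τ in t..T, g τ) + A * exp (-(2 * γ) * t)) := hineq t ht
    _ ≤ ω * (C * exp (-(2 * γ) * t) + A * exp (-(2 * γ) * t)) := by gcongr
    _ = (2 * γ * ω * A / (2 * γ - ω)) * exp (-(2 * γ) * t) := by
      simp only [C]; field_simp; ring

/-- Backward-in-time Grönwall lemma: the exponential decay rate `2γ` of the forcing
propagates to `g` provided `2γ` exceeds the Grönwall constant `ω`. -/
theorem backward_gronwall
    (T ω A γ : ℝ) (hT : 0 < T) (hω : 0 < ω) (hA : 0 ≤ A) (hγ : 0 < γ)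
    (hωγ : ω < 2 * γ)
    (g : ℝ → ℝ) (hgc : ContinuousOn g (Set.Icc 0 T))
    (hgnn : ∀ t ∈ Set.Icc (0 : ℝ) T, 0 ≤ g t)
    (hineq : ∀ t ∈ Set.Icc (0 : ℝ) T,
      g t ≤ ω * ((∫ τ in t..T, g τ) + A * Real.exp (-(2 * γ) * t))) :
    ∀ t ∈ Set.Icc (0 : ℝ) T,
      (∫ τ in t..T, g τ) ≤ (ω * A / (2 * γ - ω)) * Real.exp (-(2 * γ) * t) ∧
      g t ≤ (2 * γ * ω * A / (2 * γ - ω)) * Real.exp (-(2 * γ) * t) :=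
  backward_gronwall_general T ω A γ hω hA hωγ g hgc hineq
end

section
/- Let δ ∈ (0, π/2) and C₀ > 0, and let G : ℂ → ℂ be continuous on the closed strip {ξ : |Im ξ| ≤ δ}, holomorphic on its interior, and satisfy |G(ξ)| ≤ C₀·(1 + |Re ξ|)^{−2} on the strip. Then there exists a constant C > 0 such that for every x ∈ ℝ and every z ∈ [−1, 0]: |∫_ℝ e^{i x ξ}·(cosh((z+1)ξ)/cosh ξ)·G(ξ) dξ| ≤ C·e^{−δ|x|}, where the integral is over real ξ. -/
open MeasureTheory Complex Real

open Set Filter Topology Interval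

/-! In the strip `|Im ξ| ≤ δ < π/2` one has `‖cosh ξ‖ ≥ cosh (Re ξ) · cos δ` and
`‖cosh ((z+1) ξ)‖ ≤ cosh (Re ξ)`, so the kernel `cosh ((z+1) ξ) / cosh ξ` is holomorphic and
bounded by `1 / cos δ`, and the integrand decays like `(1 + |Re ξ|)⁻²` uniformly in the strip.
Cauchy's theorem on the rectangles `[-R, R] × [0, c]`, whose vertical sides contribute
`O(R⁻²)`, moves the integral to the line `Im ξ = c := δ · sign x`. There
`|e^{ixξ}| = e^{-δ|x|}`, and the rest is bounded by `∫ C₀ / (cos δ · (1 + t²)) dt = π C₀ / cos δ`.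
-/

theorem Complex.re_cosh (ξ : ℂ) : (cosh ξ).re = Real.cosh ξ.re * Real.cos ξ.im := by
  rw [Complex.cosh, Real.cosh_eq]
  simp only [div_ofNat_re, add_re, exp_re, neg_re, neg_im, Real.cos_neg]
  ring

theorem Complex.norm_cosh_le (ξ : ℂ) : ‖cosh ξ‖ ≤ Real.cosh ξ.re := by
  rw [Complex.cosh, Real.cosh_eq, norm_div, Complex.norm_ofNat]
  gcongr
  calc ‖exp ξ + exp (-ξ)‖ ≤ ‖exp ξ‖ + ‖exp (-ξ)‖ := norm_add_le _ _
    _ = Real.exp ξ.re + Real.exp (-ξ.re) := by rw [norm_exp, norm_exp, neg_re]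

theorem Complex.cosh_re_mul_cos_im_le_norm_cosh (ξ : ℂ) :
    Real.cosh ξ.re * Real.cos ξ.im ≤ ‖cosh ξ‖ :=
  re_cosh ξ ▸ re_le_norm _

theorem Complex.cosh_ne_zero_of_abs_im_lt {ξ : ℂ} (h : |ξ.im| < π / 2) : cosh ξ ≠ 0 := by
  have hcos : 0 < Real.cos ξ.im := Real.cos_pos_of_mem_Ioo (abs_lt.1 h)
  refine norm_pos_iff.1 (lt_of_lt_of_le ?_ (cosh_re_mul_cos_im_le_norm_cosh ξ))
  exact mul_pos (Real.cosh_pos _) hcos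

theorem norm_cosh_mul_div_cosh_le {δ s : ℝ} (hδ : δ < π / 2) (hs : |s| ≤ 1) {ξ : ℂ}
    (hξ : |ξ.im| ≤ δ) : ‖cosh (s * ξ) / cosh ξ‖ ≤ (Real.cos δ)⁻¹ := by
  have hcosδ : 0 < Real.cos δ :=
    Real.cos_pos_of_mem_Ioo ⟨by linarith [abs_nonneg ξ.im, Real.pi_pos], hδ⟩
  have hcos : Real.cos δ ≤ Real.cos ξ.im := by
    rw [← Real.cos_abs ξ.im]
    exact Real.cos_le_cos_of_nonneg_of_le_pi (abs_nonneg _) (by linarith [Real.pi_pos]) hξ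
  have hnum : ‖cosh (s * ξ)‖ ≤ Real.cosh ξ.re := by
    refine (norm_cosh_le _).trans ?_
    rw [re_ofReal_mul, Real.cosh_le_cosh, abs_mul]
    exact mul_le_of_le_one_left (abs_nonneg _) hs
  have hden : Real.cosh ξ.re * Real.cos δ ≤ ‖cosh ξ‖ :=
    (mul_le_mul_of_nonneg_left hcos (Real.cosh_pos _).le).trans
      (cosh_re_mul_cos_im_le_norm_cosh ξ)
  rw [norm_div, div_le_iff₀ ((mul_pos (Real.cosh_pos _) hcosδ).trans_le hden),
    inv_mul_eq_div, le_div_iff₀ hcosδ]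
  exact (mul_le_mul_of_nonneg_right hnum hcosδ.le).trans hden

theorem differentiableOn_cosh_mul_div_cosh (s : ℂ) :
    DifferentiableOn ℂ (fun w => cosh (s * w) / cosh w) {w | |w.im| < π / 2} :=
  ((differentiable_cosh.comp (differentiable_id.const_mul s)).differentiableOn).div
    differentiable_cosh.differentiableOn fun _ hw => cosh_ne_zero_of_abs_im_lt hw

section Decay

variable {E : Type*} [NormedAddCommGroup E]

theorem div_one_add_abs_sq_le {M : ℝ} (hM : 0 ≤ M) (t : ℝ) :
    M / (1 + |t|) ^ 2 ≤ M * (1 + t ^ 2)⁻¹ := by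
  rw [div_eq_mul_inv]
  gcongr
  nlinarith [abs_nonneg t, sq_abs t]

theorem nonneg_of_norm_le_div_one_add_abs_sq {g : ℝ → E} {M : ℝ}
    (hbd : ∀ t, ‖g t‖ ≤ M / (1 + |t|) ^ 2) : 0 ≤ M := by
  simpa using (norm_nonneg _).trans (hbd 0)

theorem integrable_of_norm_le_div_one_add_abs_sq {g : ℝ → E} {M : ℝ}
    (hg : AEStronglyMeasurable g) (hbd : ∀ t, ‖g t‖ ≤ M / (1 + |t|) ^ 2) : Integrable g :=
  (integrable_inv_one_add_sq.const_mul M).mono' hg <| .of_forall fun t =>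
    (hbd t).trans (div_one_add_abs_sq_le (nonneg_of_norm_le_div_one_add_abs_sq hbd) t)

theorem norm_integral_le_of_norm_le_div_one_add_abs_sq [NormedSpace ℝ E] {g : ℝ → E} {M : ℝ}
    (hbd : ∀ t, ‖g t‖ ≤ M / (1 + |t|) ^ 2) : ‖∫ t, g t‖ ≤ π * M := by
  have hM := nonneg_of_norm_le_div_one_add_abs_sq hbd
  calc ‖∫ t, g t‖ ≤ ∫ t, M * (1 + t ^ 2)⁻¹ :=
        norm_integral_le_of_norm_le (integrable_inv_one_add_sq.const_mul M) <|
          .of_forall fun t => (hbd t).trans (div_one_add_abs_sq_le hM t)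
    _ = π * M := by rw [integral_const_mul, integral_univ_inv_one_add_sq, mul_comm]

end Decay

section ContourShift

variable {E : Type*} [NormedAddCommGroup E] [NormedSpace ℂ E]
  {f : ℂ → E} {a b M : ℝ}

theorem tendsto_intervalIntegral_vertical_cocompact
    (hbd : ∀ ξ : ℂ, ξ.im ∈ [[a, b]] → ‖f ξ‖ ≤ M / (1 + |ξ.re|) ^ 2) :
    Tendsto (fun u : ℝ => ∫ y in a..b, f (u + y * I)) (cocompact ℝ) (𝓝 0) := by
  have hsegment : ∀ u : ℝ, ‖∫ y in a..b, f (u + y * I)‖ ≤ M / (1 + |u|) ^ 2 * |b - a| :=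
    fun u => intervalIntegral.norm_integral_le_of_norm_le_const fun y hy => by
      simpa using hbd (u + y * I) (by simpa using uIoc_subset_uIcc hy)
  have hgrowth : Tendsto (fun u : ℝ => (1 + |u|) ^ 2) (cocompact ℝ) atTop :=
    (tendsto_pow_atTop two_ne_zero).comp
      (tendsto_atTop_add_const_left _ 1 tendsto_norm_cocompact_atTop)
  refine squeeze_zero_norm hsegment ?_
  simpa [div_eq_mul_inv] using (hgrowth.inv_tendsto_atTop.const_mul M).mul_const |b - a|

theorem integral_horizontal_line_eq [CompleteSpace E]
    (hc : ContinuousOn f {ξ | ξ.im ∈ [[a, b]]}) (hd : DifferentiableOn ℂ f {ξ | ξ.im ∈ uIoo a b})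
    (hbd : ∀ ξ : ℂ, ξ.im ∈ [[a, b]] → ‖f ξ‖ ≤ M / (1 + |ξ.re|) ^ 2) :
    ∫ t : ℝ, f (t + a * I) = ∫ t : ℝ, f (t + b * I) := by
  have hint : ∀ c ∈ [[a, b]], Integrable fun t : ℝ => f (t + c * I) := fun c hc' =>
    integrable_of_norm_le_div_one_add_abs_sq
      (hc.comp_continuous (by fun_prop) fun t => by simpa using hc').aestronglyMeasurable
      fun t => by simpa using hbd (t + c * I) (by simpa using hc')
  have hrect : ∀ R : ℝ,
      (∫ t in -R..R, f (t + a * I)) - (∫ t in -R..R, f (t + b * I)) =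
        I • (∫ y in a..b, f (↑(-R) + y * I)) - I • ∫ y in a..b, f (↑R + y * I) := by
    intro R
    have h := integral_boundary_rect_eq_zero_of_continuousOn_of_differentiableOn f ⟨-R, a⟩ ⟨R, b⟩
      (hc.mono fun ξ hξ => hξ.2) (hd.mono fun ξ hξ => hξ.2)
    dsimp only at h
    rw [← sub_eq_zero, ← h]
    abel
  have hvert := tendsto_intervalIntegral_vertical_cocompact hbd
  have hlhs := ((intervalIntegral_tendsto_integral (hint a left_mem_uIcc) tendsto_neg_atTop_atBot
    tendsto_id).sub (intervalIntegral_tendsto_integral (hint b right_mem_uIcc)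
      tendsto_neg_atTop_atBot tendsto_id))
  have hrhs : Tendsto (fun R : ℝ => I • (∫ y in a..b, f (↑(-R) + y * I)) -
      I • ∫ y in a..b, f (↑R + y * I)) atTop (𝓝 0) := by
    simpa using ((hvert.comp (tendsto_neg_atTop_atBot.mono_right atBot_le_cocompact)).const_smul
      I).sub ((hvert.comp (tendsto_id.mono_right atTop_le_cocompact)).const_smul I)
  exact sub_eq_zero.1 (tendsto_nhds_unique (hlhs.congr hrect) hrhs)

end ContourShift

theorem abs_le_abs_of_mem_uIcc_zero {y c : ℝ} (h : y ∈ [[0, c]]) : |y| ≤ |c| := by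
  simpa using abs_sub_left_of_mem_uIcc h

theorem abs_lt_abs_of_mem_uIoo_zero {y c : ℝ} (h : y ∈ uIoo 0 c) : |y| < |c| :=
  abs_lt.2 ⟨(le_min (neg_nonpos.2 (abs_nonneg c)) (neg_abs_le c)).trans_lt h.1,
    h.2.trans_le (max_le (abs_nonneg c) (le_abs_self c))⟩

theorem norm_exp_I_mul_ofReal_mul (x : ℝ) (ξ : ℂ) :
    ‖exp (I * x * ξ)‖ = Real.exp (-(x * ξ.im)) := by
  rw [norm_exp]
  simp [mul_re, mul_im]

theorem norm_integral_exp_mul_le_of_strip {F : ℂ → ℂ} {δ M : ℝ} (hδ : 0 ≤ δ)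
    (hc : ContinuousOn F {ξ | |ξ.im| ≤ δ}) (hd : DifferentiableOn ℂ F {ξ | |ξ.im| < δ})
    (hbd : ∀ ξ : ℂ, |ξ.im| ≤ δ → ‖F ξ‖ ≤ M / (1 + |ξ.re|) ^ 2) (x : ℝ) :
    ‖∫ t : ℝ, exp (I * x * t) * F t‖ ≤ π * M * Real.exp (-δ * |x|) := by
  obtain ⟨c, hcδ, hxc⟩ : ∃ c, |c| ≤ δ ∧ x * c = δ * |x| := by
    rcases le_or_gt 0 x with hx | hx
    · exact ⟨δ, (abs_of_nonneg hδ).le, by rw [abs_of_nonneg hx]; ring⟩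
    · exact ⟨-δ, (abs_neg δ).trans (abs_of_nonneg hδ) |>.le, by rw [abs_of_neg hx]; ring⟩
  have hclosed : {ξ : ℂ | ξ.im ∈ [[0, c]]} ⊆ {ξ | |ξ.im| ≤ δ} := fun ξ hξ =>
    (abs_le_abs_of_mem_uIcc_zero hξ).trans hcδ
  have hopen : {ξ : ℂ | ξ.im ∈ uIoo 0 c} ⊆ {ξ | |ξ.im| < δ} := fun ξ hξ =>
    (abs_lt_abs_of_mem_uIoo_zero hξ).trans_le hcδ
  have hshift := integral_horizontal_line_eq (f := fun w => exp (I * x * w) * F w)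
    (M := Real.exp (δ * |x|) * M)
    ((by fun_prop : Continuous fun w => exp (I * x * w)).continuousOn.mul hc |>.mono hclosed)
    ((by fun_prop : Differentiable ℂ fun w => exp (I * x * w)).differentiableOn.mul hd
      |>.mono hopen)
    fun ξ hξ => by
      have hexp : -(x * ξ.im) ≤ δ * |x| :=
        calc -(x * ξ.im) ≤ |ξ.im| * |x| := (neg_le_abs _).trans_eq (by rw [abs_mul, mul_comm])
          _ ≤ δ * |x| := mul_le_mul_of_nonneg_right (hclosed hξ) (abs_nonneg x)
      rw [norm_mul, norm_exp_I_mul_ofReal_mul, mul_div_assoc]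
      exact mul_le_mul (Real.exp_le_exp.2 hexp) (hbd ξ (hclosed hξ)) (norm_nonneg _)
        (Real.exp_pos _).le
  simp only [ofReal_zero, zero_mul, add_zero] at hshift
  rw [hshift]
  refine (norm_integral_le_of_norm_le_div_one_add_abs_sq (M := Real.exp (-δ * |x|) * M)
    fun t => ?_).trans_eq (by ring)
  have him : (t + c * I : ℂ).im = c := by simp
  have hre : (t + c * I : ℂ).re = t := by simp
  have hF := hbd (t + c * I) (by rw [him]; exact hcδ)
  rw [hre] at hF
  rw [norm_mul, norm_exp_I_mul_ofReal_mul, him, mul_div_assoc, hxc, neg_mul]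
  exact mul_le_mul_of_nonneg_left hF (Real.exp_pos _).le
/-- Exponential spatial decay of the harmonic extension of exponentially localized
boundary data, via contour shifting to `Im ξ = ±δ`. -/
theorem harmonic_extension_exponential_decay
    (δ : ℝ) (hδ0 : 0 < δ) (hδ : δ < Real.pi / 2) (C₀ : ℝ) (hC₀ : 0 < C₀)
    (G : ℂ → ℂ)
    (hGcont : ContinuousOn G {ξ : ℂ | |ξ.im| ≤ δ})
    (hGhol : DifferentiableOn ℂ G {ξ : ℂ | |ξ.im| < δ})
    (hGbound : ∀ ξ : ℂ, |ξ.im| ≤ δ → ‖G ξ‖ ≤ C₀ / (1 + |ξ.re|) ^ 2) :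
    ∃ C : ℝ, 0 < C ∧ ∀ x : ℝ, ∀ z ∈ Set.Icc (-1 : ℝ) 0,
      ‖∫ ξ : ℝ, Complex.exp (Complex.I * (x : ℂ) * (ξ : ℂ)) *
          (Complex.cosh (((z : ℂ) + 1) * (ξ : ℂ)) / Complex.cosh (ξ : ℂ)) * G (ξ : ℂ)‖
        ≤ C * Real.exp (-δ * |x|) := by
  have hcos : 0 < Real.cos δ := Real.cos_pos_of_mem_Ioo ⟨by linarith, hδ⟩
  refine ⟨π * (C₀ / Real.cos δ), by positivity, fun x z hz => ?_⟩
  have hs : |z + 1| ≤ 1 := abs_le.2 ⟨by linarith [hz.1], by linarith [hz.2]⟩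
  have hstrip : {ξ : ℂ | |ξ.im| ≤ δ} ⊆ {ξ | |ξ.im| < π / 2} := fun ξ hξ => hξ.trans_lt hδ
  have hkernel := differentiableOn_cosh_mul_div_cosh ((z : ℂ) + 1)
  have hbound : ∀ ξ : ℂ, |ξ.im| ≤ δ →
      ‖cosh ((z + 1) * ξ) / cosh ξ * G ξ‖ ≤ C₀ / Real.cos δ / (1 + |ξ.re|) ^ 2 := by
    intro ξ hξ
    have hk := norm_cosh_mul_div_cosh_le hδ hs hξ
    push_cast at hk
    calc ‖cosh ((z + 1) * ξ) / cosh ξ * G ξ‖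
        ≤ (Real.cos δ)⁻¹ * (C₀ / (1 + |ξ.re|) ^ 2) := by
          rw [norm_mul]
          exact mul_le_mul hk (hGbound ξ hξ) (norm_nonneg _) (inv_nonneg.2 hcos.le)
      _ = C₀ / Real.cos δ / (1 + |ξ.re|) ^ 2 := by ring
  simpa only [mul_assoc] using norm_integral_exp_mul_le_of_strip
    (F := fun w => cosh ((z + 1) * w) / cosh w * G w) hδ0.le
    ((hkernel.continuousOn.mono hstrip).mul hGcont)
    ((hkernel.mono fun ξ (hξ : |ξ.im| < δ) => hstrip hξ.le).mul hGhol) hbound x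
end

section
/- Let d > 0 and let f : ℝ → ℂ be a smooth function such that for every natural number n there is a constant C_n with |f^{(n)}(x)| ≤ C_n·e^{−d|x|} for all x ∈ ℝ. Define F(ξ) = ∫_ℝ f(x)·e^{−i x ξ} dx for complex ξ with |Im ξ| < d. Then the integral converges absolutely, F is holomorphic on the open strip {ξ : |Im ξ| < d}, and for every δ ∈ (0, d) and every natural number N there exists a constant C such that |F(ξ)| ≤ C·(1 + |Re ξ|)^{−N} for all ξ with |Im ξ| ≤ δ. -/
open MeasureTheory Complex Real

open Filter Set

private lemma exp_abs_integrable {b : ℝ} (hb : 0 < b) :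
    Integrable (fun x : ℝ => Real.exp (-b * |x|)) := by
  have h1 : IntegrableOn (fun x : ℝ => Real.exp (-b * |x|)) (Ioi 0) :=
    (exp_neg_integrableOn_Ioi 0 hb).congr_fun
      (fun x hx => by rw [abs_of_pos hx]) measurableSet_Ioi
  have h2 : IntegrableOn (fun x : ℝ => Real.exp (-b * |x|)) (Iic 0) := by
    rw [← Measure.map_neg_eq_self (volume : Measure ℝ)]
    have m : MeasurableEmbedding fun x : ℝ => -x := (Homeomorph.neg ℝ).measurableEmbedding
    rw [m.integrableOn_map_iff]
    simp_rw [Function.comp_def, abs_neg, neg_preimage, neg_Iic, neg_zero]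
    exact (integrableOn_Ici_iff_integrableOn_Ioi).mpr h1
  have hu : (univ : Set ℝ) = Iic 0 ∪ Ioi 0 := Iic_union_Ioi.symm
  rw [← integrableOn_univ, hu]
  exact h2.union h1

private lemma norm_exp_term (ξ : ℂ) (x : ℝ) :
    ‖Complex.exp (-Complex.I * (x : ℂ) * ξ)‖ = Real.exp (x * ξ.im) := by
  rw [Complex.norm_exp]
  congr 1
  simp [Complex.mul_re, Complex.mul_im]

private lemma bound_pt {d : ℝ} {g : ℝ → ℂ} {C : ℝ}
    (hC : ∀ x, ‖g x‖ ≤ C * Real.exp (-d * |x|)) {δ : ℝ} {ξ : ℂ} (hξ : |ξ.im| ≤ δ) (x : ℝ) :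
    ‖g x * Complex.exp (-Complex.I * (x : ℂ) * ξ)‖ ≤ C * Real.exp (-(d - δ) * |x|) := by
  rw [norm_mul, norm_exp_term]
  have h1 : Real.exp (x * ξ.im) ≤ Real.exp (δ * |x|) := by
    apply Real.exp_le_exp.2
    calc x * ξ.im ≤ |x * ξ.im| := le_abs_self _
      _ = |x| * |ξ.im| := abs_mul _ _
      _ ≤ |x| * δ := by
          have := abs_nonneg x
          nlinarith
      _ = δ * |x| := mul_comm _ _
  calc ‖g x‖ * Real.exp (x * ξ.im)
      ≤ (C * Real.exp (-d * |x|)) * Real.exp (δ * |x|) :=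
        mul_le_mul (hC x) h1 (Real.exp_pos _).le ((norm_nonneg _).trans (hC x))
    _ = C * Real.exp (-(d - δ) * |x|) := by
        rw [mul_assoc, ← Real.exp_add]; ring_nf

private lemma integrable_mul_exp {d : ℝ} (hd : 0 < d) {g : ℝ → ℂ} (hg : Continuous g)
    {C : ℝ} (hC : ∀ x, ‖g x‖ ≤ C * Real.exp (-d * |x|))
    {ξ : ℂ} (hξ : |ξ.im| < d) :
    Integrable (fun x : ℝ => g x * Complex.exp (-Complex.I * (x : ℂ) * ξ)) := by
  have hcont : Continuous fun x : ℝ => g x * Complex.exp (-Complex.I * (x : ℂ) * ξ) := by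
    fun_prop
  refine Integrable.mono'
    ((exp_abs_integrable (b := d - |ξ.im|) (by linarith)).const_mul C)
    hcont.aestronglyMeasurable ?_
  filter_upwards with x
  exact bound_pt hC le_rfl x

private lemma hasDerivAt_E (ξ : ℂ) (x : ℝ) :
    HasDerivAt (fun y : ℝ => Complex.exp (-Complex.I * (y : ℂ) * ξ))
      (Complex.exp (-Complex.I * (x : ℂ) * ξ) * (-Complex.I * ξ)) x := by
  have h0 : HasDerivAt (fun y : ℝ => (y : ℂ)) 1 x := by
    simpa using (hasDerivAt_id x).ofReal_comp
  have h1 : HasDerivAt (fun y : ℝ => -Complex.I * (y : ℂ) * ξ) (-Complex.I * ξ) x := by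
    simpa [mul_assoc, mul_comm, mul_left_comm] using (h0.mul_const ξ).const_mul (-Complex.I)
  exact h1.cexp

private lemma hasDerivAt_E' (x : ℝ) (ξ : ℂ) :
    HasDerivAt (fun z : ℂ => Complex.exp (-Complex.I * (x : ℂ) * z))
      (Complex.exp (-Complex.I * (x : ℂ) * ξ) * (-Complex.I * (x : ℂ))) ξ := by
  have h1 : HasDerivAt (fun z : ℂ => -Complex.I * (x : ℂ) * z) (-Complex.I * (x : ℂ)) ξ := by
    simpa using (hasDerivAt_id ξ).const_mul (-Complex.I * (x : ℂ))
  exact h1.cexp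

/-- Paley–Wiener type result: the Fourier transform of a smooth function whose
derivatives all decay like `e^{−d|x|}` extends holomorphically to the strip
`|Im ξ| < d` with rapid polynomial decay on any closed substrip. -/
theorem paley_wiener_strip
    (d : ℝ) (hd : 0 < d) (f : ℝ → ℂ) (hf : ContDiff ℝ (⊤ : ℕ∞) f)
    (hdecay : ∀ n : ℕ, ∃ C : ℝ, ∀ x : ℝ,
      ‖iteratedDeriv n f x‖ ≤ C * Real.exp (-d * |x|)) :
    (∀ ξ : ℂ, |ξ.im| < d →
      Integrable (fun x : ℝ => f x * Complex.exp (-Complex.I * (x : ℂ) * ξ))) ∧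
    DifferentiableOn ℂ
      (fun ξ : ℂ => ∫ x : ℝ, f x * Complex.exp (-Complex.I * (x : ℂ) * ξ))
      {ξ : ℂ | |ξ.im| < d} ∧
    ∀ δ : ℝ, 0 < δ → δ < d → ∀ N : ℕ, ∃ C : ℝ, ∀ ξ : ℂ, |ξ.im| ≤ δ →
      ‖∫ x : ℝ, f x * Complex.exp (-Complex.I * (x : ℂ) * ξ)‖
        ≤ C / (1 + |ξ.re|) ^ N := by
  have cont : ∀ n : ℕ, Continuous (iteratedDeriv n f) := fun n =>
    hf.continuous_iteratedDeriv n (by exact_mod_cast le_top)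
  have diff : ∀ n : ℕ, Differentiable ℝ (iteratedDeriv n f) := fun n =>
    hf.differentiable_iteratedDeriv n (by exact_mod_cast ENat.coe_lt_top n)
  -- Integrability of all derivative integrands
  have hInt : ∀ n : ℕ, ∀ ξ : ℂ, |ξ.im| < d →
      Integrable (fun x : ℝ => iteratedDeriv n f x * Complex.exp (-Complex.I * (x : ℂ) * ξ)) := by
    intro n ξ hξ
    obtain ⟨C, hC⟩ := hdecay n
    exact integrable_mul_exp hd (cont n) hC hξ
  have hInt0 : ∀ ξ : ℂ, |ξ.im| < d →
      Integrable (fun x : ℝ => f x * Complex.exp (-Complex.I * (x : ℂ) * ξ)) := by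
    intro ξ hξ
    simpa [iteratedDeriv_zero] using hInt 0 ξ hξ
  refine ⟨hInt0, ?_, ?_⟩
  · -- Holomorphy
    intro ξ₀ hξ₀
    simp only [mem_setOf_eq] at hξ₀
    set r : ℝ := (d - |ξ₀.im|) / 2 with hr
    have hrpos : 0 < r := by simp only [hr]; linarith
    set δ' : ℝ := |ξ₀.im| + r with hδ'
    have hδ'd : δ' < d := by simp only [hδ', hr]; linarith
    -- the multiplied function g x = f x * (-I x) decays at rate d'' := (d + δ')/2
    obtain ⟨C0, hC0⟩ := hdecay 0
    simp only [iteratedDeriv_zero] at hC0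
    set c : ℝ := d - δ' with hc
    have hcpos : 0 < c := by linarith
    set d'' : ℝ := d - c / 2 with hd''
    have hδ'd'' : δ' < d'' := by simp only [hd'', hc]; linarith
    have hgdecay : ∀ x : ℝ, ‖f x * (-Complex.I * (x : ℂ))‖ ≤
        (C0 * (2 / c)) * Real.exp (-d'' * |x|) := by
      intro x
      have hx1 : |x| ≤ (2 / c) * Real.exp (c / 2 * |x|) := by
        have h2 : c / 2 * |x| ≤ Real.exp (c / 2 * |x|) := by
          linarith [Real.add_one_le_exp (c / 2 * |x|)]
        calc |x| = (2 / c) * (c / 2 * |x|) := by field_simp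
          _ ≤ (2 / c) * Real.exp (c / 2 * |x|) :=
            mul_le_mul_of_nonneg_left h2 (by positivity)
      have : ‖f x * (-Complex.I * (x : ℂ))‖ = ‖f x‖ * |x| := by
        simp
      rw [this]
      calc ‖f x‖ * |x| ≤ (C0 * Real.exp (-d * |x|)) * ((2 / c) * Real.exp (c / 2 * |x|)) :=
            mul_le_mul (hC0 x) hx1 (abs_nonneg x) ((norm_nonneg _).trans (hC0 x))
        _ = (C0 * (2 / c)) * Real.exp (-d'' * |x|) := by
            rw [hd'']
            rw [show C0 * Real.exp (-d * |x|) * (2 / c * Real.exp (c / 2 * |x|))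
              = C0 * (2 / c) * (Real.exp (-d * |x|) * Real.exp (c / 2 * |x|)) by ring,
              ← Real.exp_add]
            ring_nf
    have key := hasDerivAt_integral_of_dominated_loc_of_deriv_le (μ := volume)
      (F := fun (z : ℂ) (x : ℝ) => f x * Complex.exp (-Complex.I * (x : ℂ) * z))
      (F' := fun (z : ℂ) (x : ℝ) =>
        (f x * (-Complex.I * (x : ℂ))) * Complex.exp (-Complex.I * (x : ℂ) * z))
      (x₀ := ξ₀) (s := Metric.ball ξ₀ r)
      (bound := fun x => (C0 * (2 / c)) * Real.exp (-(d'' - δ') * |x|))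
      (Metric.ball_mem_nhds ξ₀ hrpos) ?_ (hInt0 ξ₀ hξ₀) ?_ ?_ ?_ ?_
    · exact key.2.differentiableAt.differentiableWithinAt
    · filter_upwards with z
      exact (hf.continuous.mul (by fun_prop)).aestronglyMeasurable
    · exact ((hf.continuous.mul (by fun_prop)).mul (by fun_prop)).aestronglyMeasurable
    · filter_upwards with x
      intro z hz
      have him : |z.im| ≤ δ' := by
        have h1 : |z.im - ξ₀.im| ≤ ‖z - ξ₀‖ := by
          simpa using Complex.abs_im_le_norm (z - ξ₀)
        have h2 : ‖z - ξ₀‖ < r := by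
          simpa [Metric.mem_ball, Complex.dist_eq] using hz
        simp only [hδ']
        calc |z.im| = |ξ₀.im + (z.im - ξ₀.im)| := by ring_nf
          _ ≤ |ξ₀.im| + |z.im - ξ₀.im| := abs_add_le _ _
          _ ≤ |ξ₀.im| + r := by linarith
      exact bound_pt hgdecay him x
    · exact (exp_abs_integrable (by linarith)).const_mul _
    · filter_upwards with x
      intro z _
      have h := (hasDerivAt_E' x z).const_mul (f x)
      convert h using 1
      · rfl
      ring
  · -- Decay estimate
    -- integration by parts identity
    have hIBP : ∀ (n : ℕ) (ξ : ℂ), |ξ.im| < d →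
        ∫ x : ℝ, iteratedDeriv (n + 1) f x * Complex.exp (-Complex.I * (x : ℂ) * ξ)
        = (Complex.I * ξ) *
          ∫ x : ℝ, iteratedDeriv n f x * Complex.exp (-Complex.I * (x : ℂ) * ξ) := by
      intro n ξ hξ
      set u : ℝ → ℂ := iteratedDeriv n f
      set u' : ℝ → ℂ := iteratedDeriv (n + 1) f
      set v : ℝ → ℂ := fun x => Complex.exp (-Complex.I * (x : ℂ) * ξ)
      set v' : ℝ → ℂ := fun x => Complex.exp (-Complex.I * (x : ℂ) * ξ) * (-Complex.I * ξ)
      have hu : ∀ x, HasDerivAt u (u' x) x := by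
        intro x
        have := (diff n x).hasDerivAt
        simpa [u, u', iteratedDeriv_succ] using this
      have hv : ∀ x, HasDerivAt v (v' x) x := fun x => hasDerivAt_E ξ x
      have huv' : Integrable (u * v') := by
        have : (u * v') = fun x => (u x * v x) * (-Complex.I * ξ) := by
          funext x; simp only [Pi.mul_apply, u, v, v']; ring
        rw [this]
        exact (hInt n ξ hξ).mul_const _
      have hu'v : Integrable (u' * v) := hInt (n + 1) ξ hξ
      have huv : Integrable (u * v) := hInt n ξ hξ
      have h := integral_mul_deriv_eq_deriv_mul_of_integrable (fun x _ => hu x) (fun x _ => hv x) huv' hu'v huv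
      have hL : ∫ x : ℝ, u x * v' x = (∫ x : ℝ, u x * v x) * (-Complex.I * ξ) := by
        rw [← integral_mul_const]
        congr 1; funext x; simp only [u, v, v']; ring
      rw [hL] at h
      have : ∫ x : ℝ, u' x * v x = (Complex.I * ξ) * ∫ x : ℝ, u x * v x := by
        linear_combination h
      exact this
    have hiter : ∀ (N : ℕ) (ξ : ℂ), |ξ.im| < d →
        ∫ x : ℝ, iteratedDeriv N f x * Complex.exp (-Complex.I * (x : ℂ) * ξ)
        = (Complex.I * ξ) ^ N * ∫ x : ℝ, f x * Complex.exp (-Complex.I * (x : ℂ) * ξ) := by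
      intro N
      induction N with
      | zero => intro ξ hξ; simp [iteratedDeriv_zero]
      | succ n ih =>
        intro ξ hξ
        rw [hIBP n ξ hξ, ih ξ hξ, pow_succ]
        ring
    intro δ hδ0 hδd N
    obtain ⟨C0, hC0⟩ := hdecay 0
    obtain ⟨CN, hCN⟩ := hdecay N
    set B0 : ℝ := ∫ x : ℝ, C0 * Real.exp (-(d - δ) * |x|) with hB0
    set BN : ℝ := ∫ x : ℝ, CN * Real.exp (-(d - δ) * |x|) with hBN
    have hbint : Integrable (fun x : ℝ => Real.exp (-(d - δ) * |x|)) :=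
      exp_abs_integrable (by linarith)
    have hbound : ∀ (n : ℕ) (Cn : ℝ), (∀ x, ‖iteratedDeriv n f x‖ ≤ Cn * Real.exp (-d * |x|)) →
        ∀ ξ : ℂ, |ξ.im| ≤ δ →
        ‖∫ x : ℝ, iteratedDeriv n f x * Complex.exp (-Complex.I * (x : ℂ) * ξ)‖
          ≤ ∫ x : ℝ, Cn * Real.exp (-(d - δ) * |x|) := by
      intro n Cn hCn ξ hξ
      apply norm_integral_le_of_norm_le (hbint.const_mul Cn)
      filter_upwards with x
      exact bound_pt hCn hξ x
    refine ⟨2 ^ N * max B0 BN, ?_⟩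
    intro ξ hξ
    have hξd : |ξ.im| < d := lt_of_le_of_lt hξ hδd
    have h0 : ‖∫ x : ℝ, f x * Complex.exp (-Complex.I * (x : ℂ) * ξ)‖ ≤ B0 := by
      have h1 := hbound 0 C0 hC0 ξ hξ
      simp only [iteratedDeriv_zero] at h1
      exact h1
    have hN : ‖ξ‖ ^ N * ‖∫ x : ℝ, f x * Complex.exp (-Complex.I * (x : ℂ) * ξ)‖
        ≤ BN := by
      have h1 := hbound N CN hCN ξ hξ
      rw [hiter N ξ hξd, norm_mul, norm_pow, norm_mul, Complex.norm_I, one_mul] at h1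
      exact h1
    set F : ℝ := ‖∫ x : ℝ, f x * Complex.exp (-Complex.I * (x : ℂ) * ξ)‖ with hF
    have hFnn : 0 ≤ F := norm_nonneg _
    rw [le_div_iff₀ (by positivity)]
    have hre : |ξ.re| ≤ ‖ξ‖ := by
      exact Complex.abs_re_le_norm ξ
    have h2 : (1 + |ξ.re|) ^ N ≤ 2 ^ N * max 1 ‖ξ‖ ^ N := by
      rw [← mul_pow]
      apply pow_le_pow_left₀ (by positivity)
      rcases le_total ‖ξ‖ 1 with h | h
      · rw [max_eq_left h]; linarith [hre.trans h]
      · rw [max_eq_right h]; linarith [hre]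
    calc F * (1 + |ξ.re|) ^ N ≤ F * (2 ^ N * max 1 ‖ξ‖ ^ N) := by
          apply mul_le_mul_of_nonneg_left h2 hFnn
      _ = 2 ^ N * (max 1 ‖ξ‖ ^ N * F) := by ring
      _ ≤ 2 ^ N * max B0 BN := by
          apply mul_le_mul_of_nonneg_left _ (by positivity)
          rcases le_total ‖ξ‖ 1 with h | h
          · rw [max_eq_left h]
            simpa using h0.trans (le_max_left _ _)
          · rw [max_eq_right h]
            exact hN.trans (le_max_right _ _)
end

section
/- Let d > 0 and let f : ℝ → ℂ be a smooth function such that for every natural number n there is a constant C_n with |f^{(n)}(x)| ≤ C_n·e^{−d|x|} for all x ∈ ℝ. Let f̂(ξ) = ∫_ℝ f(y)·e^{−i y ξ} dy and define u(x, z) = ∫_ℝ e^{i x ξ}·(cosh(ξ(z+1))/cosh ξ)·f̂(ξ) dξ for x ∈ ℝ and z ∈ [−1, 0]. Then for every δ with 0 < δ < min(d, π/2) there exists a constant C such that |u(x, z)| ≤ C·e^{−δ|x|} for all x ∈ ℝ and all z ∈ [−1, 0]. -/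
open MeasureTheory Complex Real Set

lemma HED_integrable_exp_neg_abs {c : ℝ} (hc : 0 < c) :
    Integrable fun y : ℝ => Real.exp (-c * |y|) := by
  have hIoi : IntegrableOn (fun y : ℝ => Real.exp (-c * |y|)) (Ici 0) := by
    rw [integrableOn_Ici_iff_integrableOn_Ioi]
    exact (exp_neg_integrableOn_Ioi 0 hc).congr_fun
      (fun y hy => by rw [abs_of_pos hy]) measurableSet_Ioi
  set I1 : ℝ → ℝ := (Ici (0:ℝ)).indicator (fun y => Real.exp (-c * |y|)) with hI1
  have h1 : Integrable I1 := (integrable_indicator_iff measurableSet_Ici).2 hIoi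
  have h2 : Integrable (fun y => I1 (-y)) := h1.comp_neg
  have hcont : Continuous fun y : ℝ => Real.exp (-c * |y|) :=
    Real.continuous_exp.comp (continuous_const.mul continuous_abs)
  refine (h1.add h2).mono' hcont.aestronglyMeasurable ?_
  filter_upwards with y
  rw [Real.norm_eq_abs, abs_of_pos (Real.exp_pos _)]
  rcases le_or_gt 0 y with hy | hy
  · have : I1 y = Real.exp (-c * |y|) := indicator_of_mem hy _
    simp only [Pi.add_apply, this]
    have : 0 ≤ I1 (-y) := by
      unfold I1; exact Set.indicator_nonneg (fun a _ => (Real.exp_pos _).le) _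
    linarith
  · have hmem : -y ∈ Ici (0:ℝ) := by simp; linarith
    have h2' : I1 (-y) = Real.exp (-c * |y|) := by
      rw [hI1, indicator_of_mem hmem]; rw [abs_neg]
    have : 0 ≤ I1 y := Set.indicator_nonneg (fun a _ => (Real.exp_pos _).le) _
    simp only [Pi.add_apply, h2']
    linarith

lemma HED_norm_mul_cexp {g : ℝ → ℂ} {A c δ : ℝ} (hb : ∀ y, ‖g y‖ ≤ A * Real.exp (-c * |y|))
    {ζ : ℂ} (him : |ζ.im| ≤ δ) (y : ℝ) :
    ‖g y * Complex.exp (-Complex.I * y * ζ)‖ ≤ A * Real.exp (-(c - δ) * |y|) := by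
  rw [norm_mul]
  have hne : ‖Complex.exp (-Complex.I * y * ζ)‖ = Real.exp (y * ζ.im) := by
    rw [Complex.norm_exp]
    congr 1
    simp [Complex.mul_re]
  rw [hne]
  have h1 : Real.exp (y * ζ.im) ≤ Real.exp (δ * |y|) := by
    apply Real.exp_le_exp.2
    calc y * ζ.im ≤ |y * ζ.im| := le_abs_self _
      _ = |y| * |ζ.im| := abs_mul _ _
      _ ≤ |y| * δ := by nlinarith [abs_nonneg y]
      _ = δ * |y| := mul_comm _ _
  calc ‖g y‖ * Real.exp (y * ζ.im) ≤ (A * Real.exp (-c * |y|)) * Real.exp (δ * |y|) :=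
        mul_le_mul (hb y) h1 (Real.exp_pos _).le ((norm_nonneg _).trans (hb y))
    _ = A * Real.exp (-(c - δ) * |y|) := by rw [mul_assoc, ← Real.exp_add]; ring_nf

lemma HED_integrable_mul_cexp {g : ℝ → ℂ} (hg : Continuous g) {A c δ : ℝ} (hcδ : δ < c)
    (hb : ∀ y, ‖g y‖ ≤ A * Real.exp (-c * |y|)) {ζ : ℂ} (him : |ζ.im| ≤ δ) :
    Integrable fun y : ℝ => g y * Complex.exp (-Complex.I * y * ζ) := by
  refine ((HED_integrable_exp_neg_abs (by linarith : (0:ℝ) < c - δ)).const_mul A).mono'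
    ?_ (Filter.Eventually.of_forall fun y => HED_norm_mul_cexp hb him y)
  exact (hg.mul (Complex.continuous_exp.comp
    (((continuous_const.mul Complex.continuous_ofReal).mul continuous_const)))).aestronglyMeasurable

lemma HED_ibp {g h : ℝ → ℂ} (hderiv : ∀ y : ℝ, HasDerivAt g (h y) y)
    (hgc : Continuous g) (hhc : Continuous h) {A B c δ : ℝ} (hcδ : δ < c)
    (hgb : ∀ y, ‖g y‖ ≤ A * Real.exp (-c * |y|)) (hhb : ∀ y, ‖h y‖ ≤ B * Real.exp (-c * |y|))
    {ζ : ℂ} (him : |ζ.im| ≤ δ) :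
    ∫ y : ℝ, h y * Complex.exp (-Complex.I * y * ζ)
      = (Complex.I * ζ) * ∫ y : ℝ, g y * Complex.exp (-Complex.I * y * ζ) := by
  set e : ℝ → ℂ := fun y => Complex.exp (-Complex.I * y * ζ) with he
  have hede : ∀ y : ℝ, HasDerivAt e ((-Complex.I * ζ) * e y) y := by
    intro y
    have h0 : HasDerivAt (fun y : ℝ => (y : ℂ)) 1 y := Complex.ofRealCLM.hasDerivAt
    have h1 : HasDerivAt (fun y : ℝ => -Complex.I * (y:ℂ) * ζ) (-Complex.I * ζ) y := by
      simpa using (h0.const_mul (-Complex.I)).mul_const ζ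
    simpa [he, mul_comm] using h1.cexp
  have hφ : ∀ y : ℝ, HasDerivAt (fun y => g y * e y)
      (h y * e y + (-Complex.I * ζ) * (g y * e y)) y := by
    intro y
    have : HasDerivAt (fun y => g y * e y) _ y := (hderiv y).mul (hede y)
    convert this using 1
    ring
  have Ih : Integrable (fun y : ℝ => h y * e y) := HED_integrable_mul_cexp hhc hcδ hhb him
  have Ig : Integrable (fun y : ℝ => g y * e y) := HED_integrable_mul_cexp hgc hcδ hgb him
  have Iφ' : Integrable (fun y : ℝ => h y * e y + (-Complex.I * ζ) * (g y * e y)) :=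
    Ih.add (Ig.const_mul _)
  have hlim1 : Filter.Tendsto
      (fun T : ℝ => ∫ y in (-T)..T, (h y * e y + (-Complex.I * ζ) * (g y * e y)))
      Filter.atTop (nhds (∫ y : ℝ, (h y * e y + (-Complex.I * ζ) * (g y * e y)))) :=
    intervalIntegral_tendsto_integral Iφ' Filter.tendsto_neg_atTop_atBot Filter.tendsto_id
  have heq : ∀ T : ℝ, (∫ y in (-T)..T, (h y * e y + (-Complex.I * ζ) * (g y * e y)))
      = (g T * e T) - (g (-T) * e (-T)) := by
    intro T
    apply intervalIntegral.integral_eq_sub_of_hasDerivAt (fun y _ => hφ y)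
    apply Continuous.intervalIntegrable
    have hec : Continuous e := Complex.continuous_exp.comp
      ((continuous_const.mul Complex.continuous_ofReal).mul continuous_const)
    continuity
  have hlim2 : Filter.Tendsto (fun T : ℝ => (g T * e T) - (g (-T) * e (-T)))
      Filter.atTop (nhds 0) := by
    have hbnd : ∀ T : ℝ, ‖(g T * e T) - (g (-T) * e (-T))‖
        ≤ 2 * (A * Real.exp (-(c - δ) * |T|)) := by
      intro T
      have b1 := HED_norm_mul_cexp hgb him T
      have b2 := HED_norm_mul_cexp hgb him (-T)
      rw [abs_neg] at b2
      calc ‖g T * e T - g (-T) * e (-T)‖ ≤ ‖g T * e T‖ + ‖g (-T) * e (-T)‖ := norm_sub_le _ _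
        _ ≤ 2 * (A * Real.exp (-(c - δ) * |T|)) := by rw [two_mul]; exact add_le_add b1 b2
    refine squeeze_zero_norm hbnd ?_
    have habs : Filter.Tendsto (fun T : ℝ => |T|) Filter.atTop Filter.atTop :=
      Filter.tendsto_abs_atTop_atTop
    have h3 : Filter.Tendsto (fun T : ℝ => -(c - δ) * |T|) Filter.atTop Filter.atBot := by
      have h4 := habs.const_mul_atTop (by linarith : (0:ℝ) < c - δ)
      have h5 := Filter.tendsto_neg_atTop_atBot.comp h4
      have : (fun T : ℝ => -(c - δ) * |T|) = (Neg.neg ∘ fun T : ℝ => (c - δ) * |T|) := by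
        funext T; simp only [Function.comp]; ring
      rw [this]; exact h5
    have h6 := (Real.tendsto_exp_atBot.comp h3).const_mul (2 * A)
    simpa [mul_assoc, Function.comp] using h6
  have hzero : (∫ y : ℝ, (h y * e y + (-Complex.I * ζ) * (g y * e y))) = 0 := by
    apply tendsto_nhds_unique hlim1
    have : (fun T : ℝ => ∫ y in (-T)..T, (h y * e y + (-Complex.I * ζ) * (g y * e y)))
        = fun T : ℝ => (g T * e T) - (g (-T) * e (-T)) := funext heq
    rw [this]; exact hlim2
  have hsm : (fun y : ℝ => (-Complex.I * ζ) * (g y * e y))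
      = fun y : ℝ => (-Complex.I * ζ) • (g y * e y) := by
    funext y; rw [smul_eq_mul]
  rw [integral_add Ih (Ig.const_mul _), hsm, integral_smul, smul_eq_mul] at hzero
  have := eq_neg_of_add_eq_zero_left hzero
  rw [this]
  ring

lemma HED_abs_le_exp {c y : ℝ} (hc : 0 < c) : |y| ≤ (2 / c) * Real.exp (c / 2 * |y|) := by
  have h := Real.add_one_le_exp (c / 2 * |y|)
  have h2 : c / 2 * |y| ≤ Real.exp (c / 2 * |y|) := by linarith
  calc |y| = (2 / c) * (c / 2 * |y|) := by field_simp
    _ ≤ (2 / c) * Real.exp (c / 2 * |y|) := by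
        apply mul_le_mul_of_nonneg_left h2 (by positivity)

lemma HED_F_diff {f : ℝ → ℂ} (hfc : Continuous f) {C d : ℝ} (hd : 0 < d)
    (hb : ∀ y, ‖f y‖ ≤ C * Real.exp (-d * |y|)) {ζ : ℂ} (him : |ζ.im| < d) :
    DifferentiableAt ℂ (fun w => ∫ y : ℝ, f y * Complex.exp (-Complex.I * y * w)) ζ := by
  have hC : 0 ≤ C := le_trans (norm_nonneg (f 0)) (by simpa using hb 0)
  set ε : ℝ := (d - |ζ.im|) / 2 with hε
  have hεpos : 0 < ε := by simp only [hε]; linarith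
  set δ' : ℝ := |ζ.im| + ε with hδ'
  have hδ'd : δ' < d := by simp only [hδ', hε]; linarith
  have hδ'0 : 0 ≤ δ' := by positivity
  set c' : ℝ := d - δ' with hc'
  have hc'pos : 0 < c' := by linarith
  -- the auxiliary function with the extra factor y
  set g1 : ℝ → ℂ := fun y => f y * (-Complex.I * (y : ℂ)) with hg1
  have hg1c : Continuous g1 := by
    apply hfc.mul; exact continuous_const.mul Complex.continuous_ofReal
  have hg1b : ∀ y, ‖g1 y‖ ≤ (C * (2 / c')) * Real.exp (-(d - c' / 2) * |y|) := by
    intro y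
    have : ‖g1 y‖ = ‖f y‖ * |y| := by
      rw [hg1]; simp [norm_mul]
    rw [this]
    calc ‖f y‖ * |y| ≤ (C * Real.exp (-d * |y|)) * ((2 / c') * Real.exp (c' / 2 * |y|)) := by
          apply mul_le_mul (hb y) (HED_abs_le_exp hc'pos) (abs_nonneg y)
            (le_trans (norm_nonneg _) (hb y))
      _ = (C * (2 / c')) * Real.exp (-(d - c' / 2) * |y|) := by
          rw [mul_mul_mul_comm, ← Real.exp_add]; ring_nf
  have key := hasDerivAt_integral_of_dominated_loc_of_deriv_le (μ := volume)
    (F := fun (w : ℂ) (y : ℝ) => f y * Complex.exp (-Complex.I * y * w))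
    (F' := fun (w : ℂ) (y : ℝ) => g1 y * Complex.exp (-Complex.I * y * w))
    (x₀ := ζ)
    (bound := fun y : ℝ => (C * (2 / c')) * Real.exp (-(c' / 2) * |y|))
    (Metric.ball_mem_nhds ζ hεpos) ?_ ?_ ?_ ?_ ?_ ?_
  · exact key.2.differentiableAt
  · filter_upwards with w
    exact (hfc.mul (Complex.continuous_exp.comp
      (((continuous_const.mul Complex.continuous_ofReal).mul continuous_const)))).aestronglyMeasurable
  · exact HED_integrable_mul_cexp hfc him hb (le_refl |ζ.im|)
  · exact (hg1c.mul (Complex.continuous_exp.comp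
      (((continuous_const.mul Complex.continuous_ofReal).mul continuous_const)))).aestronglyMeasurable
  · filter_upwards with y
    intro w hw
    have himw : |w.im| ≤ δ' := by
      have h1 : |w.im - ζ.im| ≤ ‖w - ζ‖ := by
        simpa using Complex.abs_im_le_norm (w - ζ)
      have h2 : ‖w - ζ‖ < ε := by simpa [Metric.mem_ball, dist_eq_norm] using hw
      have := abs_sub_abs_le_abs_sub w.im ζ.im
      simp only [hδ']
      have h3 : |w.im| - |ζ.im| ≤ |w.im - ζ.im| := abs_sub_abs_le_abs_sub _ _
      linarith
    have := HED_norm_mul_cexp hg1b himw y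
    convert this using 3
    ring
  · exact (HED_integrable_exp_neg_abs (by linarith : (0:ℝ) < c' / 2)).const_mul _
  · filter_upwards with y
    intro w hw
    have h0 : HasDerivAt (fun w : ℂ => -Complex.I * (y:ℂ) * w) (-Complex.I * (y:ℂ)) w := by
      simpa using (hasDerivAt_id w).const_mul (-Complex.I * (y:ℂ))
    have h1 := h0.cexp
    have h2 : HasDerivAt (fun w : ℂ => f y * Complex.exp (-Complex.I * y * w)) _ w :=
      h1.const_mul (f y)
    refine h2.congr_deriv ?_
    ring

/-- Single-transform norm bound. -/
lemma HED_norm_F_le {g : ℝ → ℂ} (hg : Continuous g) {A c δ : ℝ} (hcδ : δ < c)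
    (hb : ∀ y, ‖g y‖ ≤ A * Real.exp (-c * |y|)) {ζ : ℂ} (him : |ζ.im| ≤ δ) :
    ‖∫ y : ℝ, g y * Complex.exp (-Complex.I * y * ζ)‖
      ≤ A * ∫ y : ℝ, Real.exp (-(c - δ) * |y|) := by
  have hInt : Integrable fun y : ℝ => A * Real.exp (-(c - δ) * |y|) :=
    (HED_integrable_exp_neg_abs (by linarith : (0:ℝ) < c - δ)).const_mul A
  have := norm_integral_le_of_norm_le hInt
    (Filter.Eventually.of_forall fun y => HED_norm_mul_cexp hb him y)
  calc ‖∫ y : ℝ, g y * Complex.exp (-Complex.I * y * ζ)‖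
      ≤ ∫ y : ℝ, A * Real.exp (-(c - δ) * |y|) := this
    _ = A * ∫ y : ℝ, Real.exp (-(c - δ) * |y|) := by
        rw [← smul_eq_mul, ← integral_smul]; simp [smul_eq_mul]

/-- Quadratic decay of the Fourier transform on a horizontal line. -/
lemma HED_F_bound {f f1 f2 : ℝ → ℂ}
    (hdf : ∀ y, HasDerivAt f (f1 y) y) (hdf1 : ∀ y, HasDerivAt f1 (f2 y) y)
    (hfc : Continuous f) (hf1c : Continuous f1) (hf2c : Continuous f2)
    {C0 C1 C2 c δ : ℝ} (hcδ : δ < c)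
    (hb0 : ∀ y, ‖f y‖ ≤ C0 * Real.exp (-c * |y|))
    (hb1 : ∀ y, ‖f1 y‖ ≤ C1 * Real.exp (-c * |y|))
    (hb2 : ∀ y, ‖f2 y‖ ≤ C2 * Real.exp (-c * |y|))
    {ζ : ℂ} (him : |ζ.im| ≤ δ) :
    (1 + ζ.re ^ 2) * ‖∫ y : ℝ, f y * Complex.exp (-Complex.I * y * ζ)‖
      ≤ (C0 + C2) * ∫ y : ℝ, Real.exp (-(c - δ) * |y|) := by
  set F : ℂ := ∫ y : ℝ, f y * Complex.exp (-Complex.I * y * ζ) with hF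
  have E0 : ‖F‖ ≤ C0 * ∫ y : ℝ, Real.exp (-(c - δ) * |y|) := HED_norm_F_le hfc hcδ hb0 him
  have E2 : ‖∫ y : ℝ, f2 y * Complex.exp (-Complex.I * y * ζ)‖
      ≤ C2 * ∫ y : ℝ, Real.exp (-(c - δ) * |y|) := HED_norm_F_le hf2c hcδ hb2 him
  have ibp1 : (∫ y : ℝ, f1 y * Complex.exp (-Complex.I * y * ζ)) = Complex.I * ζ * F :=
    HED_ibp hdf hfc hf1c hcδ hb0 hb1 him
  have ibp2 : (∫ y : ℝ, f2 y * Complex.exp (-Complex.I * y * ζ))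
      = Complex.I * ζ * (Complex.I * ζ * F) := by
    rw [HED_ibp hdf1 hf1c hf2c hcδ hb1 hb2 him, ibp1]
  have hre2 : ζ.re ^ 2 * ‖F‖ ≤ C2 * ∫ y : ℝ, Real.exp (-(c - δ) * |y|) := by
    have hnorm : ‖Complex.I * ζ * (Complex.I * ζ * F)‖ = ‖ζ‖ ^ 2 * ‖F‖ := by
      simp [norm_mul]; ring
    have h1 : ζ.re ^ 2 ≤ ‖ζ‖ ^ 2 := by
      rw [Complex.sq_norm, Complex.normSq_apply]
      nlinarith [sq_nonneg ζ.im]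
    have h2 : ζ.re ^ 2 * ‖F‖ ≤ ‖ζ‖ ^ 2 * ‖F‖ :=
      mul_le_mul_of_nonneg_right h1 (norm_nonneg _)
    rw [← hnorm, ← ibp2] at h2
    exact h2.trans E2
  calc (1 + ζ.re ^ 2) * ‖F‖ = ‖F‖ + ζ.re ^ 2 * ‖F‖ := by ring
    _ ≤ (C0 + C2) * ∫ y : ℝ, Real.exp (-(c - δ) * |y|) := by
        rw [add_mul]; exact add_le_add E0 hre2

lemma HED_cosh_re (w : ℂ) : (Complex.cosh w).re = Real.cosh w.re * Real.cos w.im := by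
  have h : Complex.cosh w = (Complex.exp w + Complex.exp (-w)) / 2 := rfl
  rw [h]
  have : ((Complex.exp w + Complex.exp (-w)) / 2).re
      = ((Complex.exp w).re + (Complex.exp (-w)).re) / 2 := by
    simp [Complex.div_re, Complex.add_re, Complex.normSq]
  rw [this, Complex.exp_re, Complex.exp_re]
  simp [Complex.neg_re, Complex.neg_im, Real.cos_neg, Real.cosh_eq]
  ring
lemma HED_cosh_upper (w : ℂ) : ‖Complex.cosh w‖ ≤ Real.cosh w.re := by
  have h : Complex.cosh w = (Complex.exp w + Complex.exp (-w)) / 2 := rfl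
  rw [h, Real.cosh_eq]
  calc ‖(Complex.exp w + Complex.exp (-w)) / 2‖ = ‖Complex.exp w + Complex.exp (-w)‖ / 2 := by
        simp
    _ ≤ (‖Complex.exp w‖ + ‖Complex.exp (-w)‖) / 2 := by
        have := norm_add_le (Complex.exp w) (Complex.exp (-w)); linarith
    _ = (Real.exp w.re + Real.exp (-w.re)) / 2 := by
        rw [Complex.norm_exp, Complex.norm_exp,
          Complex.neg_re]

lemma HED_cosh_lower {ζ : ℂ} {δ : ℝ} (hδπ : δ < Real.pi / 2) (him : |ζ.im| ≤ δ) :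
    Real.cosh ζ.re * Real.cos δ ≤ ‖Complex.cosh ζ‖ := by
  have hδ0 : 0 ≤ δ := le_trans (abs_nonneg _) him
  have hcos : Real.cos δ ≤ Real.cos ζ.im := by
    rw [← Real.cos_abs ζ.im]
    exact Real.cos_le_cos_of_nonneg_of_le_pi (abs_nonneg _)
      (by linarith [Real.pi_pos]) him
  have h1 : Real.cosh ζ.re * Real.cos δ ≤ Real.cosh ζ.re * Real.cos ζ.im :=
    mul_le_mul_of_nonneg_left hcos (Real.cosh_pos _).le
  have h2 : Real.cosh ζ.re * Real.cos ζ.im ≤ |(Complex.cosh ζ).re| := by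
    rw [HED_cosh_re]; exact le_abs_self _
  have h3 : |(Complex.cosh ζ).re| ≤ ‖Complex.cosh ζ‖ := by
    exact Complex.abs_re_le_norm _
  linarith

lemma HED_cosh_ne_zero {ζ : ℂ} {δ : ℝ} (hδπ : δ < Real.pi / 2) (him : |ζ.im| ≤ δ) :
    Complex.cosh ζ ≠ 0 := by
  have hδ0 : 0 ≤ δ := le_trans (abs_nonneg _) him
  have hcospos : 0 < Real.cos δ :=
    Real.cos_pos_of_mem_Ioo ⟨by linarith [Real.pi_pos], hδπ⟩
  have := HED_cosh_lower hδπ him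
  have hpos : 0 < ‖Complex.cosh ζ‖ :=
    lt_of_lt_of_le (by positivity) this
  exact norm_pos_iff.mp hpos

lemma HED_kernel_bound {ζ : ℂ} {z δ : ℝ} (hz : z ∈ Icc (-1:ℝ) 0)
    (hδπ : δ < Real.pi / 2) (him : |ζ.im| ≤ δ) :
    ‖Complex.cosh (ζ * ((z : ℂ) + 1)) / Complex.cosh ζ‖ ≤ 1 / Real.cos δ := by
  have hδ0 : 0 ≤ δ := le_trans (abs_nonneg _) him
  have hcospos : 0 < Real.cos δ :=
    Real.cos_pos_of_mem_Ioo ⟨by linarith [Real.pi_pos], hδπ⟩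
  have hre : (ζ * ((z : ℂ) + 1)).re = ζ.re * (z + 1) := by
    simp [Complex.mul_re]
  have h1 : ‖Complex.cosh (ζ * ((z : ℂ) + 1))‖ ≤ Real.cosh ζ.re := by
    refine (HED_cosh_upper _).trans ?_
    rw [hre, Real.cosh_le_cosh]
    rw [abs_mul]
    have hz1 : |z + 1| ≤ 1 := by
      rw [abs_le]; constructor <;> [linarith [hz.1]; linarith [hz.2]]
    nlinarith [abs_nonneg ζ.re]
  have h2 : Real.cosh ζ.re * Real.cos δ ≤ ‖Complex.cosh ζ‖ := HED_cosh_lower hδπ him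
  rw [norm_div]
  calc ‖Complex.cosh (ζ * ((z : ℂ) + 1))‖ / ‖Complex.cosh ζ‖
      ≤ Real.cosh ζ.re / (Real.cosh ζ.re * Real.cos δ) :=
        div_le_div₀ (Real.cosh_pos _).le h1 (by positivity) h2
    _ = 1 / Real.cos δ := by
        rw [div_mul_eq_div_div]
        congr 1
        exact div_self (Real.cosh_pos ζ.re).ne'

lemma HED_kernel_diff {z δ : ℝ} (hδπ : δ < Real.pi / 2) {ζ : ℂ} (him : |ζ.im| ≤ δ) :
    DifferentiableAt ℂ (fun w => Complex.cosh (w * ((z : ℂ) + 1)) / Complex.cosh w) ζ := by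
  refine DifferentiableAt.div ?_ ?_ (HED_cosh_ne_zero hδπ him)
  · exact (differentiableAt_id.mul_const _).ccosh
  · exact Complex.differentiable_cosh.differentiableAt

lemma HED_line_integrable {g : ℂ → ℂ} {δ : ℝ}
    (hdiff : ∀ ζ : ℂ, |ζ.im| ≤ δ → DifferentiableAt ℂ g ζ)
    {C : ℝ} (hb : ∀ ζ : ℂ, |ζ.im| ≤ δ → ‖g ζ‖ ≤ C / (1 + ζ.re ^ 2))
    {s : ℝ} (hs : |s| ≤ δ) :
    Integrable fun ξ : ℝ => g ((ξ : ℂ) + s * Complex.I) := by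
  have hcont : Continuous fun ξ : ℝ => g ((ξ : ℂ) + s * Complex.I) := by
    rw [continuous_iff_continuousAt]
    intro ξ
    have him : |((ξ : ℂ) + s * Complex.I).im| ≤ δ := by simpa using hs
    have h2 : ContinuousAt (fun x : ℝ => (x : ℂ) + s * Complex.I) ξ :=
      (Complex.continuous_ofReal.add continuous_const).continuousAt
    exact ContinuousAt.comp (f := fun x : ℝ => (x : ℂ) + s * Complex.I)
      ((hdiff _ him).continuousAt) h2
  refine ((integrable_inv_one_add_sq).const_mul C).mono' hcont.aestronglyMeasurable ?_
  filter_upwards with ξ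
  have him : |((ξ : ℂ) + s * Complex.I).im| ≤ δ := by simpa using hs
  have := hb _ him
  simpa [div_eq_mul_inv] using this

lemma HED_shift {g : ℂ → ℂ} {δ : ℝ}
    (hdiff : ∀ ζ : ℂ, |ζ.im| ≤ δ → DifferentiableAt ℂ g ζ)
    {C : ℝ} (hb : ∀ ζ : ℂ, |ζ.im| ≤ δ → ‖g ζ‖ ≤ C / (1 + ζ.re ^ 2))
    {t : ℝ} (ht : |t| ≤ δ) :
    ∫ ξ : ℝ, g ((ξ : ℂ) + t * Complex.I) = ∫ ξ : ℝ, g ξ := by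
  have hδ0 : 0 ≤ δ := le_trans (abs_nonneg _) ht
  have hint0 : Integrable fun ξ : ℝ => g ξ := by
    have := HED_line_integrable hdiff hb (s := 0) (by simpa using hδ0)
    simpa using this
  have hintt : Integrable fun ξ : ℝ => g ((ξ : ℂ) + t * Complex.I) :=
    HED_line_integrable hdiff hb ht
  have rect : ∀ T : ℝ,
      (∫ x : ℝ in (-T)..T, g x) - (∫ x : ℝ in (-T)..T, g ((x : ℂ) + t * Complex.I))
        = Complex.I * (∫ y : ℝ in (0:ℝ)..t, g (-(T : ℂ) + y * Complex.I))
          - Complex.I * (∫ y : ℝ in (0:ℝ)..t, g ((T : ℂ) + y * Complex.I)) := by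
    intro T
    have H := Complex.integral_boundary_rect_eq_zero_of_differentiableOn g
      ((-T : ℝ) : ℂ) ((T : ℝ) + t * Complex.I) ?_
    · simp only [Complex.ofReal_re, Complex.ofReal_im, Complex.add_re, Complex.add_im,
        Complex.mul_re, Complex.mul_im, Complex.I_re, Complex.I_im, Complex.ofReal_neg,
        Complex.neg_re, Complex.neg_im, mul_zero, mul_one, zero_mul, sub_zero, add_zero,
        zero_add, zero_sub, neg_zero, neg_neg, Complex.ofReal_zero, smul_eq_mul] at H
      linear_combination H
    · intro ζ hζ
      have him : |ζ.im| ≤ δ := by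
        rw [Complex.mem_reProdIm] at hζ
        have h2 := hζ.2
        have him1 : ζ.im ∈ Set.uIcc ((((-T : ℝ)) : ℂ)).im ((T : ℝ) + t * Complex.I).im := h2
        have : ζ.im ∈ Set.uIcc (0 : ℝ) t := by simpa using him1
        rw [Set.uIcc_eq_union] at this
        have habs : |ζ.im| ≤ |t| := by
          rcases this with h | h
          · rw [Set.mem_Icc] at h
            rcases le_or_gt 0 t with h' | h'
            · rw [_root_.abs_of_nonneg h.1, _root_.abs_of_nonneg h']; exact h.2
            · rw [_root_.abs_of_nonneg h.1]; exact h.2.trans (le_abs_self t)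
          · rw [Set.mem_Icc] at h
            rw [abs_le]; constructor
            · exact (neg_abs_le t).trans h.1
            · exact h.2.trans (le_trans (abs_nonneg _) (le_refl _))
        exact habs.trans ht
      exact (hdiff ζ him).differentiableWithinAt
  -- vertical integrals tend to zero
  have hvert : ∀ s : ℂ, s.im = 0 → ∀ T : ℝ, s.re = T ∨ s.re = -T →
      ‖∫ y : ℝ in (0:ℝ)..t, g (s + y * Complex.I)‖ ≤ C / (1 + T ^ 2) * |t| := by
    intro s hs T hsT
    have : ∀ y ∈ Set.uIoc (0:ℝ) t, ‖g (s + y * Complex.I)‖ ≤ C / (1 + T ^ 2) := by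
      intro y hy
      have hyabs : |y| ≤ |t| := by
        rcases Set.mem_uIoc.mp hy with h | h
        · rw [_root_.abs_of_pos h.1, _root_.abs_of_nonneg (h.1.le.trans h.2)]; exact h.2
        · rw [abs_le]; constructor
          · exact (neg_abs_le t).trans h.1.le
          · exact h.2.trans (abs_nonneg _)
      have him : |(s + y * Complex.I).im| ≤ δ := by
        simp [hs]
        exact hyabs.trans ht
      have := hb _ him
      have hre : (s + y * Complex.I).re = s.re := by simp
      rw [hre] at this
      rcases hsT with h | h <;> rw [h] at this <;> simpa [neg_pow] using this
    have := intervalIntegral.norm_integral_le_of_norm_le_const this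
    simpa [sub_zero] using this
  have hlim1 : Filter.Tendsto (fun T : ℝ => ∫ x : ℝ in (-T)..T, g x) Filter.atTop
      (nhds (∫ x : ℝ, g x)) :=
    intervalIntegral_tendsto_integral hint0 Filter.tendsto_neg_atTop_atBot Filter.tendsto_id
  have hlim2 : Filter.Tendsto (fun T : ℝ => ∫ x : ℝ in (-T)..T, g ((x : ℂ) + t * Complex.I))
      Filter.atTop (nhds (∫ x : ℝ, g ((x : ℂ) + t * Complex.I))) :=
    intervalIntegral_tendsto_integral hintt Filter.tendsto_neg_atTop_atBot Filter.tendsto_id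
  have hdiff2 := hlim1.sub hlim2
  have hzero : Filter.Tendsto
      (fun T : ℝ => (∫ x : ℝ in (-T)..T, g x) - ∫ x : ℝ in (-T)..T, g ((x : ℂ) + t * Complex.I))
      Filter.atTop (nhds 0) := by
    have hbnd : ∀ T : ℝ,
        ‖(∫ x : ℝ in (-T)..T, g x) - ∫ x : ℝ in (-T)..T, g ((x : ℂ) + t * Complex.I)‖
          ≤ 2 * (C / (1 + T ^ 2) * |t|) := by
      intro T
      rw [rect T]
      have hm : ∀ y : ℝ, -(T : ℂ) + (y : ℂ) * Complex.I = ((-T : ℂ)) + (y : ℂ) * Complex.I := by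
        intro y; ring
      have v1 := hvert (-(T : ℂ)) (by simp) T (Or.inr (by simp))
      have v2 := hvert ((T : ℂ)) (by simp) T (Or.inl (by simp))
      calc ‖Complex.I * (∫ y : ℝ in (0:ℝ)..t, g (-(T : ℂ) + y * Complex.I))
            - Complex.I * (∫ y : ℝ in (0:ℝ)..t, g ((T : ℂ) + y * Complex.I))‖
          ≤ ‖Complex.I * (∫ y : ℝ in (0:ℝ)..t, g (-(T : ℂ) + y * Complex.I))‖
            + ‖Complex.I * (∫ y : ℝ in (0:ℝ)..t, g ((T : ℂ) + y * Complex.I))‖ :=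
            norm_sub_le _ _
        _ = ‖∫ y : ℝ in (0:ℝ)..t, g (-(T : ℂ) + y * Complex.I)‖
            + ‖∫ y : ℝ in (0:ℝ)..t, g ((T : ℂ) + y * Complex.I)‖ := by
            rw [norm_mul, norm_mul]; simp
        _ ≤ 2 * (C / (1 + T ^ 2) * |t|) := by
            rw [two_mul]; exact add_le_add v1 v2
    refine squeeze_zero_norm hbnd ?_
    have h1 : Filter.Tendsto (fun T : ℝ => 1 + T ^ 2) Filter.atTop Filter.atTop :=
      Filter.tendsto_atTop_add_const_left _ 1 (Filter.tendsto_pow_atTop two_ne_zero)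
    have h2 : Filter.Tendsto (fun T : ℝ => (1 + T ^ 2)⁻¹) Filter.atTop (nhds 0) :=
      tendsto_inv_atTop_zero.comp h1
    have h3 := ((h2.const_mul C).mul_const |t|).const_mul 2
    simpa [div_eq_mul_inv, mul_assoc] using h3
  have := tendsto_nhds_unique hdiff2 hzero
  have heq := sub_eq_zero.mp this
  exact heq.symm

/-- The harmonic extension of exponentially localized boundary data to the flat
strip `ℝ × [−1, 0]` inherits exponential decay in the horizontal variable at any
rate `δ < min(d, π/2)`. -/
theorem harmonic_extension_inherits_decay
    (d : ℝ) (hd : 0 < d) (f : ℝ → ℂ) (hf : ContDiff ℝ (⊤ : ℕ∞) f)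
    (hdecay : ∀ n : ℕ, ∃ C : ℝ, ∀ x : ℝ,
      ‖iteratedDeriv n f x‖ ≤ C * Real.exp (-d * |x|)) :
    ∀ δ : ℝ, 0 < δ → δ < min d (Real.pi / 2) →
      ∃ C : ℝ, ∀ x : ℝ, ∀ z ∈ Set.Icc (-1 : ℝ) 0,
        ‖∫ ξ : ℝ, Complex.exp (Complex.I * (x : ℂ) * (ξ : ℂ)) *
            ((Real.cosh (ξ * (z + 1)) / Real.cosh ξ : ℝ) : ℂ) *
            (∫ y : ℝ, f y * Complex.exp (-Complex.I * (y : ℂ) * (ξ : ℂ)))‖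
          ≤ C * Real.exp (-δ * |x|) := by
  intro δ hδ0 hδlt
  obtain ⟨hδd, hδπ⟩ := lt_min_iff.mp hδlt
  -- derivatives of f
  have hfinf : ContDiff ℝ (⊤ : ℕ∞) f := hf.of_le (by simp)
  have hf1 : ContDiff ℝ (⊤ : ℕ∞) (deriv f) := (contDiff_infty_iff_deriv.mp hfinf).2
  have hf2 : ContDiff ℝ (⊤ : ℕ∞) (deriv (deriv f)) := (contDiff_infty_iff_deriv.mp hf1).2
  have hdf : ∀ y : ℝ, HasDerivAt f (deriv f y) y := fun y =>
    ((hfinf.differentiable (by simp)) y).hasDerivAt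
  have hdf1 : ∀ y : ℝ, HasDerivAt (deriv f) (deriv (deriv f) y) y := fun y =>
    ((hf1.differentiable (by simp)) y).hasDerivAt
  have hfc : Continuous f := hfinf.continuous
  have hf1c : Continuous (deriv f) := hf1.continuous
  have hf2c : Continuous (deriv (deriv f)) := hf2.continuous
  obtain ⟨C0, hb0⟩ := hdecay 0
  obtain ⟨C1, hb1⟩ := hdecay 1
  obtain ⟨C2, hb2⟩ := hdecay 2
  simp only [iteratedDeriv_zero] at hb0
  simp only [iteratedDeriv_one] at hb1
  have hb2' : ∀ y : ℝ, ‖deriv (deriv f) y‖ ≤ C2 * Real.exp (-d * |y|) := by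
    intro y
    have := hb2 y
    rwa [show iteratedDeriv 2 f = deriv (deriv f) by
      rw [iteratedDeriv_succ, iteratedDeriv_one]] at this
  have hC0 : 0 ≤ C0 := by
    have h := hb0 0
    rw [abs_zero, mul_zero, Real.exp_zero, mul_one] at h
    exact le_trans (norm_nonneg _) h
  have hC2 : 0 ≤ C2 := by
    have h := hb2' 0
    rw [abs_zero, mul_zero, Real.exp_zero, mul_one] at h
    exact le_trans (norm_nonneg _) h
  -- constants
  set K : ℝ := ∫ y : ℝ, Real.exp (-(d - δ) * |y|) with hK
  have hK0 : 0 ≤ K := integral_nonneg fun y => (Real.exp_pos _).le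
  set CF : ℝ := (C0 + C2) * K with hCF
  have hCF0 : 0 ≤ CF := mul_nonneg (by linarith) hK0
  have hcos : 0 < Real.cos δ := Real.cos_pos_of_mem_Ioo ⟨by linarith [Real.pi_pos], hδπ⟩
  set KQ : ℝ := ∫ ξ : ℝ, (1 + ξ ^ 2)⁻¹ with hKQ
  have hKQ0 : 0 ≤ KQ := integral_nonneg fun ξ => by positivity
  refine ⟨CF / Real.cos δ * KQ, ?_⟩
  intro x z hz
  set t : ℝ := if 0 ≤ x then δ else -δ with htdef
  have habs_t : |t| ≤ δ := by
    rcases le_or_gt 0 x with h | h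
    · simp [htdef, if_pos h, _root_.abs_of_pos hδ0]
    · simp [htdef, if_neg (not_le.mpr h), _root_.abs_of_pos hδ0]
  have hxt : -(x * t) = -δ * |x| := by
    rcases le_or_gt 0 x with h | h
    · simp [htdef, if_pos h, _root_.abs_of_nonneg h]; ring
    · simp [htdef, if_neg (not_le.mpr h), _root_.abs_of_neg h]; ring
  set G : ℂ → ℂ := fun ζ => Complex.exp (Complex.I * x * ζ) *
      (Complex.cosh (ζ * ((z : ℂ) + 1)) / Complex.cosh ζ) *
      (∫ y : ℝ, f y * Complex.exp (-Complex.I * y * ζ)) with hG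
  -- the integrand is G restricted to ℝ
  have hGr : ∀ ξ : ℝ, Complex.exp (Complex.I * (x : ℂ) * (ξ : ℂ)) *
      ((Real.cosh (ξ * (z + 1)) / Real.cosh ξ : ℝ) : ℂ) *
      (∫ y : ℝ, f y * Complex.exp (-Complex.I * (y : ℂ) * (ξ : ℂ))) = G (ξ : ℂ) := by
    intro ξ
    rw [hG]
    congr 2
    rw [Complex.ofReal_div, Complex.ofReal_cosh, Complex.ofReal_cosh]
    norm_cast
  -- norm of the exponential factor
  have hexpnorm : ∀ ζ : ℂ, ‖Complex.exp (Complex.I * x * ζ)‖ = Real.exp (-(x * ζ.im)) := by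
    intro ζ
    rw [Complex.norm_exp]
    congr 1
    simp [Complex.mul_re]
  -- Fourier factor bound
  have hFb : ∀ ζ : ℂ, |ζ.im| ≤ δ →
      ‖∫ y : ℝ, f y * Complex.exp (-Complex.I * y * ζ)‖ ≤ CF / (1 + ζ.re ^ 2) := by
    intro ζ him
    have h := HED_F_bound hdf hdf1 hfc hf1c hf2c hδd hb0 hb1 hb2' him
    rw [← hK, ← hCF] at h
    have hpos : (0 : ℝ) < 1 + ζ.re ^ 2 := by positivity
    rw [le_div_iff₀ hpos]
    linarith [h]
  -- differentiability of G on the strip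
  have hGdiff : ∀ ζ : ℂ, |ζ.im| ≤ δ → DifferentiableAt ℂ G ζ := by
    intro ζ him
    refine DifferentiableAt.mul (DifferentiableAt.mul ?_ (HED_kernel_diff hδπ him)) ?_
    · exact ((differentiableAt_id.const_mul (Complex.I * x)).cexp)
    · exact HED_F_diff hfc hd hb0 (lt_of_le_of_lt him hδd)
  -- bound for G on the strip (crude, x-dependent)
  have hGb : ∀ ζ : ℂ, |ζ.im| ≤ δ →
      ‖G ζ‖ ≤ (Real.exp (|x| * δ) * (CF / Real.cos δ)) / (1 + ζ.re ^ 2) := by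
    intro ζ him
    have hpos : (0 : ℝ) < 1 + ζ.re ^ 2 := by positivity
    have h1 : ‖Complex.exp (Complex.I * x * ζ)‖ ≤ Real.exp (|x| * δ) := by
      rw [hexpnorm]
      apply Real.exp_le_exp.2
      calc -(x * ζ.im) ≤ |x * ζ.im| := neg_le_abs _
        _ = |x| * |ζ.im| := abs_mul _ _
        _ ≤ |x| * δ := mul_le_mul_of_nonneg_left him (abs_nonneg x)
    have h2 := HED_kernel_bound hz hδπ him
    have h3 := hFb ζ him
    rw [hG]
    calc ‖Complex.exp (Complex.I * x * ζ) *
          (Complex.cosh (ζ * ((z : ℂ) + 1)) / Complex.cosh ζ) *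
          (∫ y : ℝ, f y * Complex.exp (-Complex.I * y * ζ))‖
        = ‖Complex.exp (Complex.I * x * ζ)‖ *
          ‖Complex.cosh (ζ * ((z : ℂ) + 1)) / Complex.cosh ζ‖ *
          ‖∫ y : ℝ, f y * Complex.exp (-Complex.I * y * ζ)‖ := by rw [norm_mul, norm_mul]
      _ ≤ Real.exp (|x| * δ) * (1 / Real.cos δ) * (CF / (1 + ζ.re ^ 2)) := by
          apply mul_le_mul
          · exact mul_le_mul h1 h2 (norm_nonneg _) (Real.exp_pos _).le
          · exact h3
          · exact norm_nonneg _
          · positivity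
      _ = (Real.exp (|x| * δ) * (CF / Real.cos δ)) / (1 + ζ.re ^ 2) := by
          field_simp
  -- contour shift
  have hshift := HED_shift hGdiff hGb habs_t
  -- rewrite the goal
  have hgoal : (∫ ξ : ℝ, Complex.exp (Complex.I * (x : ℂ) * (ξ : ℂ)) *
      ((Real.cosh (ξ * (z + 1)) / Real.cosh ξ : ℝ) : ℂ) *
      (∫ y : ℝ, f y * Complex.exp (-Complex.I * (y : ℂ) * (ξ : ℂ))))
      = ∫ ξ : ℝ, G (ξ : ℂ) :=
    integral_congr_ae (Filter.Eventually.of_forall fun ξ => hGr ξ)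
  rw [hgoal, ← hshift]
  -- final estimate on the shifted line
  have hbnd : ∀ ξ : ℝ, ‖G ((ξ : ℂ) + t * Complex.I)‖
      ≤ (Real.exp (-δ * |x|) * (CF / Real.cos δ)) * (1 + ξ ^ 2)⁻¹ := by
    intro ξ
    set ζ : ℂ := (ξ : ℂ) + t * Complex.I with hζ
    have hζim : ζ.im = t := by simp [hζ]
    have hζre : ζ.re = ξ := by simp [hζ]
    have him : |ζ.im| ≤ δ := by rw [hζim]; exact habs_t
    have h2 := HED_kernel_bound hz hδπ him
    have h3 := hFb ζ him
    have h1 : ‖Complex.exp (Complex.I * x * ζ)‖ = Real.exp (-δ * |x|) := by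
      rw [hexpnorm, hζim, hxt]
    rw [hG]
    calc ‖Complex.exp (Complex.I * x * ζ) *
          (Complex.cosh (ζ * ((z : ℂ) + 1)) / Complex.cosh ζ) *
          (∫ y : ℝ, f y * Complex.exp (-Complex.I * y * ζ))‖
        = ‖Complex.exp (Complex.I * x * ζ)‖ *
          ‖Complex.cosh (ζ * ((z : ℂ) + 1)) / Complex.cosh ζ‖ *
          ‖∫ y : ℝ, f y * Complex.exp (-Complex.I * y * ζ)‖ := by rw [norm_mul, norm_mul]
      _ ≤ Real.exp (-δ * |x|) * (1 / Real.cos δ) * (CF / (1 + ζ.re ^ 2)) := by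
          apply mul_le_mul
          · rw [h1]; exact mul_le_mul_of_nonneg_left h2 (Real.exp_pos _).le
          · exact h3
          · exact norm_nonneg _
          · positivity
      _ = (Real.exp (-δ * |x|) * (CF / Real.cos δ)) * (1 + ζ.re ^ 2)⁻¹ := by
          field_simp
      _ = (Real.exp (-δ * |x|) * (CF / Real.cos δ)) * (1 + ξ ^ 2)⁻¹ := by rw [hζre]
  have hIb : Integrable fun ξ : ℝ =>
      (Real.exp (-δ * |x|) * (CF / Real.cos δ)) * (1 + ξ ^ 2)⁻¹ :=
    integrable_inv_one_add_sq.const_mul _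
  calc ‖∫ ξ : ℝ, G ((ξ : ℂ) + t * Complex.I)‖
      ≤ ∫ ξ : ℝ, (Real.exp (-δ * |x|) * (CF / Real.cos δ)) * (1 + ξ ^ 2)⁻¹ :=
        norm_integral_le_of_norm_le hIb (Filter.Eventually.of_forall hbnd)
    _ = (Real.exp (-δ * |x|) * (CF / Real.cos δ)) * KQ := by
        rw [MeasureTheory.integral_const_mul]
    _ = CF / Real.cos δ * KQ * Real.exp (-δ * |x|) := by ring
end
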